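/- arXiv:2212.13190 — 11 statements merged into one kernel-verified Lean document; each statement's English description precedes it below -/
import Mathlib

section
/- Let Θ, Θ' : G → Aut(K) be group homomorphisms, let α be a normalized 2-cocycle stabilized by Θ(G) and α' a normalized 2-cocycle stabilized by Θ'(G), let δ : G → G be a bijection and κ : G → K^* a map with κ(1) = 1. Then the K-left-linear bijection Ψ : K[G,Θ,α] → K[G,Θ',α'] determined by Ψ(a ḡ) = a·κ(g)·(δ(g))‾ is multiplicative (hence a distance-preserving ring isomorphism) if and only if: (a) δ is a group automorphism of G with Θ(g) = Θ'(δ(g)) for all g ∈ G, and (b) α(g,h) = κ(g)·Θ'(δ(g))(κ(h))·κ(gh)⁻¹·α'(δ(g),δ(h)) for all g,h ∈ G. -/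
open Finset

variable {K : Type*} {G : Type*}

/-- Multiplication of the twisted skew group ring `K[G,Θ,α]`:
`(Σ_g a_g ḡ)·(Σ_h b_h h̄) = Σ_{g,h} a_g·Θ(g)(b_h)·α(g,h)·(gh)‾`. -/
def tsMul [Field K] [Group G] [Fintype G] [DecidableEq G]
    (Θ : G →* RingAut K) (α : G → G → Kˣ) (a b : G → K) : G → K :=
  fun x => ∑ p : G × G, if p.1 * p.2 = x then a p.1 * Θ p.1 (b p.2) * (α p.1 p.2 : K) else 0

/-- The identity element `1̄` of the twisted skew group ring. -/
def tsOne [Field K] [Group G] [DecidableEq G] : (G → K) := fun x => if x = 1 then 1 else 0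

/-- The adjoint map `a ↦ â = Σ_g Θ(g⁻¹)(a_g)·α(g,g⁻¹)·(g⁻¹)‾`. -/
def tsAdj [Field K] [Group G] (Θ : G →* RingAut K) (α : G → G → Kˣ) (a : G → K) : G → K :=
  fun x => Θ x (a x⁻¹) * (α x⁻¹ x : K)

/-- The map `Ψ` determined by `Ψ(a ḡ) = a·κ(g)·(δ(g))‾`. -/
def psiMap [Field K] [Group G] [Fintype G] [DecidableEq G]
    (δ : G → G) (κ : G → Kˣ) (a : G → K) : G → K :=
  fun x => ∑ g : G, if δ g = x then a g * (κ g : K) else 0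

/-!
Both sides of `Ψ(a * b) = Ψ(a) * Ψ(b)` are biadditive in `(a, b)`, so it suffices to test
monomials `c ḡ` and `d h̄`. There `Ψ(c ḡ · d h̄) = c·Θ(g)(d)·α(g,h)·κ(gh)·(δ(gh))‾` while
`Ψ(c ḡ)·Ψ(d h̄) = c·κ(g)·Θ'(δ g)(d·κ(h))·α'(δ g,δ h)·(δ g·δ h)‾`. Taking `c = d = 1` forces
`δ(gh) = δ g·δ h` and relation (b); dividing the case `(c, d) = (1, d)` by the case
`(1, 1)` leaves `Θ(g)(d) = Θ'(δ g)(d)`.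
-/

section
variable [Field K] [Group G] [Fintype G] [DecidableEq G]

lemma tsMul_single_single (Θ : G →* RingAut K) (α : G → G → Kˣ) (g h : G) (c d : K) :
    tsMul Θ α (Pi.single g c) (Pi.single h d) = Pi.single (g * h) (c * Θ g d * α g h) := by
  funext x
  rw [tsMul, Fintype.sum_eq_single (g, h)]
  · by_cases hx : x = g * h
    · simp [hx]
    · simp [hx, Ne.symm hx]
  · rintro ⟨p, q⟩ hpq
    by_cases hp : p = g
    · subst hp
      have hq : q ≠ h := fun hq => hpq (by rw [hq])
      simp [hq]
    · simp [hp]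

lemma psiMap_single (δ : G → G) (κ : G → Kˣ) (g : G) (c : K) :
    psiMap δ κ (Pi.single g c) = Pi.single (δ g) (c * κ g) := by
  funext x
  rw [psiMap, Fintype.sum_eq_single g]
  · by_cases hx : x = δ g
    · simp [hx]
    · simp [hx, Ne.symm hx]
  · intro u hu
    simp [hu]

def psiMapAddHom (δ : G → G) (κ : G → Kˣ) : (G → K) →+ (G → K) :=
  AddMonoidHom.mk' (psiMap δ κ) fun a b => by
    funext x
    simp only [psiMap, Pi.add_apply, ← Finset.sum_add_distrib]
    refine Finset.sum_congr rfl fun g _ => ?_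
    split_ifs <;> ring

def tsMulAddHom (Θ : G →* RingAut K) (α : G → G → Kˣ) : (G → K) →+ (G → K) →+ (G → K) :=
  AddMonoidHom.mk' (fun a => AddMonoidHom.mk' (tsMul Θ α a) fun b b' => by
      funext x
      simp only [tsMul, Pi.add_apply, ← Finset.sum_add_distrib, map_add]
      refine Finset.sum_congr rfl fun p _ => ?_
      split_ifs <;> ring)
    fun a a' => by
      refine AddMonoidHom.ext fun b => funext fun x => ?_
      simp only [AddMonoidHom.mk'_apply, AddMonoidHom.add_apply, tsMul, Pi.add_apply,
        ← Finset.sum_add_distrib]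
      refine Finset.sum_congr rfl fun p _ => ?_
      split_ifs <;> ring

lemma forall_psiMap_tsMul_iff_forall_single (Θ Θ' : G →* RingAut K) (α α' : G → G → Kˣ)
    (δ : G → G) (κ : G → Kˣ) :
    (∀ a b : G → K,
        psiMap δ κ (tsMul Θ α a b) = tsMul Θ' α' (psiMap δ κ a) (psiMap δ κ b)) ↔
      ∀ (g h : G) (c d : K), psiMap δ κ (tsMul Θ α (Pi.single g c) (Pi.single h d)) =
        tsMul Θ' α' (psiMap δ κ (Pi.single g c)) (psiMap δ κ (Pi.single h d)) := by
  refine ⟨fun H g h c d => H _ _, fun H => ?_⟩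
  have hbiadd : (tsMulAddHom Θ α).compr₂ (psiMapAddHom δ κ) =
      ((tsMulAddHom Θ' α').comp (psiMapAddHom δ κ)).compl₂ (psiMapAddHom δ κ) := by
    ext g c h d : 4
    exact H g h c d
  exact fun a b => DFunLike.congr_fun (DFunLike.congr_fun hbiadd a) b

lemma forall_psiMap_tsMul_single_iff (Θ Θ' : G →* RingAut K) (α α' : G → G → Kˣ)
    (δ : G → G) (κ : G → Kˣ) :
    (∀ (g h : G) (c d : K), psiMap δ κ (tsMul Θ α (Pi.single g c) (Pi.single h d)) =
        tsMul Θ' α' (psiMap δ κ (Pi.single g c)) (psiMap δ κ (Pi.single h d))) ↔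
      ((∀ g h : G, δ (g * h) = δ g * δ h) ∧
       (∀ g : G, Θ g = Θ' (δ g)) ∧
       (∀ g h : G, (α g h : K) =
          (κ g : K) * Θ' (δ g) (κ h : K) * ((κ (g * h) : K))⁻¹ * (α' (δ g) (δ h) : K))) := by
  simp only [tsMul_single_single, psiMap_single]
  constructor
  · intro H
    have hmul : ∀ g h : G, δ (g * h) = δ g * δ h := by
      intro g h
      by_contra hne
      simpa [hne] using congrFun (H g h 1 1) (δ (g * h))
    have hcoeff : ∀ (g h : G) (c d : K), c * Θ g d * α g h * κ (g * h) =
        c * κ g * Θ' (δ g) (d * κ h) * α' (δ g) (δ h) := by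
      intro g h c d
      simpa [hmul g h] using congrFun (H g h c d) (δ (g * h))
    refine ⟨hmul, fun g => RingEquiv.ext fun d => ?_, fun g h => ?_⟩
    · have h1 := hcoeff g 1 1 d
      have h2 := hcoeff g 1 1 1
      simp only [map_mul, map_one, mul_one, one_mul] at h1 h2
      refine mul_right_cancel₀ (mul_ne_zero (α g 1).ne_zero (κ g).ne_zero) ?_
      linear_combination h1 - Θ' (δ g) d * h2
    · have h := hcoeff g h 1 1
      simp only [map_one, one_mul, mul_one] at h
      field_simp
      linear_combination h
  · rintro ⟨hmul, hΘ, hα⟩ g h c d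
    rw [hmul, hα g h, ← hΘ g, map_mul]
    field_simp
end

theorem stmt1_general [Field K] [Group G] [Fintype G] [DecidableEq G]
    (Θ Θ' : G →* RingAut K) (α α' : G → G → Kˣ)
    (δ : G → G)
    (κ : G → Kˣ) :
    (∀ a b : G → K,
        psiMap δ κ (tsMul Θ α a b) = tsMul Θ' α' (psiMap δ κ a) (psiMap δ κ b)) ↔
      ((∀ g h : G, δ (g * h) = δ g * δ h) ∧
       (∀ g : G, Θ g = Θ' (δ g)) ∧
       (∀ g h : G, (α g h : K) =
          (κ g : K) * Θ' (δ g) (κ h : K) * ((κ (g * h) : K))⁻¹ * (α' (δ g) (δ h) : K))) :=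
  (forall_psiMap_tsMul_iff_forall_single Θ Θ' α α' δ κ).trans
    (forall_psiMap_tsMul_single_iff Θ Θ' α α' δ κ)

/-- The `K`-left-linear bijection `Ψ : K[G,Θ,α] → K[G,Θ',α']` with
`Ψ(a ḡ) = a·κ(g)·(δ(g))‾` is multiplicative (hence a distance-preserving ring
isomorphism) iff `δ` is a group automorphism with `Θ = Θ' ∘ δ` and
`α(g,h) = κ(g)·Θ'(δ(g))(κ(h))·κ(gh)⁻¹·α'(δ(g),δ(h))`. -/
theorem stmt1 [Field K] [Fintype K] [Group G] [Fintype G] [DecidableEq G]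
    (Θ Θ' : G →* RingAut K) (α α' : G → G → Kˣ)
    (hnorm : ∀ g : G, α g 1 = 1 ∧ α 1 g = 1)
    (hcoc : ∀ g₁ g₂ g₃ : G, α g₁ (g₂ * g₃) * α g₂ g₃ = α (g₁ * g₂) g₃ * α g₁ g₂)
    (hstab : ∀ g x y : G, Θ g ((α x y : K)) = (α x y : K))
    (hnorm' : ∀ g : G, α' g 1 = 1 ∧ α' 1 g = 1)
    (hcoc' : ∀ g₁ g₂ g₃ : G, α' g₁ (g₂ * g₃) * α' g₂ g₃ = α' (g₁ * g₂) g₃ * α' g₁ g₂)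
    (hstab' : ∀ g x y : G, Θ' g ((α' x y : K)) = (α' x y : K))
    (δ : G → G) (hδ : Function.Bijective δ)
    (κ : G → Kˣ) (hκ : κ 1 = 1) :
    (∀ a b : G → K,
        psiMap δ κ (tsMul Θ α a b) = tsMul Θ' α' (psiMap δ κ a) (psiMap δ κ b)) ↔
      ((∀ g h : G, δ (g * h) = δ g * δ h) ∧
       (∀ g : G, Θ g = Θ' (δ g)) ∧
       (∀ g h : G, (α g h : K) =
          (κ g : K) * Θ' (δ g) (κ h : K) * ((κ (g * h) : K))⁻¹ * (α' (δ g) (δ h) : K))) :=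
  stmt1_general Θ Θ' α α' δ κ
end

section
/- Let χ_K : (K,+) → ℂ^× be an additive character of K such that the map x ↦ (y ↦ χ_K(x·y)) from K to additive characters of K is injective, and define χ_R : R → ℂ^× by χ_R(Σ_g a_g ḡ) = χ_K(a_1) (the coefficient at 1̄). Then the map r ↦ (x ↦ χ_R(r·x)) is injective on R; that is, if r, r' ∈ R satisfy χ_R(r·x) = χ_R(r'·x) for all x ∈ R, then r = r'. Consequently R is isomorphic to its character module as a right R-module, i.e. R is a Frobenius ring. -/
/-!
Pairing `(r, x) ↦ (r·x)₁` is nondegenerate: against the element `Θ(g⁻¹)(y·α(g,g⁻¹)⁻¹)·(g⁻¹)‾`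
it reads off `r_g · y`. Hence `χ_R(r·_)` determines every coefficient of `r` through the
nondegeneracy of `χ_K`. Conversely, restricting a character `ψ` of `R` to these elements gives
characters of `K`, each of the form `y ↦ χ_K(r_g·y)` by counting, and the resulting `r` satisfies
`ψ = χ_R(r·_)` because the elements additively span `R`.
-/

open Finset

variable {K : Type*} {G : Type*}

namespace AddChar

def ofMapAddEqMul {A M : Type*} [AddMonoid A] [Group M] (ψ : A → M)
    (hψ : ∀ x y, ψ (x + y) = ψ x * ψ y) : AddChar A M where
  toFun := ψ
  map_zero_eq_one' := by simpa using hψ 0 0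
  map_add_eq_mul' := hψ

lemma map_sum_eq_prod {A M ι : Type*} [AddCommMonoid A] [CommMonoid M] (ψ : AddChar A M)
    (s : Finset ι) (f : ι → A) : ψ (∑ i ∈ s, f i) = ∏ i ∈ s, ψ (f i) := by
  have h := map_prod ψ.toMonoidHom (fun i => Multiplicative.ofAdd (f i)) s
  rwa [← ofAdd_sum] at h

lemma mulShift_surjective_of_injective {R : Type*} [CommRing R] [Fintype R]
    {ψ : AddChar R ℂˣ} (hψ : Function.Injective ψ.mulShift) :
    Function.Surjective ψ.mulShift := by
  let coe := (Units.coeHom ℂ).compAddChar (A := R)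
  have hcoe : Function.Injective coe :=
    MonoidHom.compAddChar_injective_right _ Units.val_injective
  have hcoe_mulShift : ∀ a, coe (ψ.mulShift a) = (coe ψ).mulShift a := fun _ => rfl
  have hinj : Function.Injective (coe ψ).mulShift := fun a b h =>
    hψ (hcoe (by rw [hcoe_mulShift, hcoe_mulShift, h]))
  have hsurj : Function.Surjective (coe ψ).mulShift :=
    ((Fintype.bijective_iff_injective_and_card _).2 ⟨hinj, by rw [AddChar.card_eq]⟩).2
  intro φ
  obtain ⟨a, ha⟩ := hsurj (coe φ)
  exact ⟨a, hcoe (by rw [hcoe_mulShift, ha])⟩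

end AddChar

section TwistedSkewGroupRing

variable [Field K] [Group G] [DecidableEq G] (Θ : G →* RingAut K) (α : G → G → Kˣ)

lemma tsMul_apply_one [Fintype G] (r x : G → K) :
    tsMul Θ α r x 1 = ∑ g : G, r g * Θ g (x g⁻¹) * (α g g⁻¹ : K) := by
  rw [tsMul, Fintype.sum_prod_type]
  refine sum_congr rfl fun g _ => ?_
  simp_rw [mul_eq_one_iff_inv_eq]
  simp

def tsDual (g : G) (y : K) : G → K :=
  Pi.single g⁻¹ (Θ g⁻¹ (y * (α g g⁻¹ : K)⁻¹))

lemma tsDual_add (g : G) (y z : K) :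
    tsDual Θ α g (y + z) = tsDual Θ α g y + tsDual Θ α g z := by
  simp only [tsDual, add_mul, map_add, Pi.single_add]

lemma tsMul_tsDual_apply_one [Fintype G] (r : G → K) (g : G) (y : K) :
    tsMul Θ α r (tsDual Θ α g y) 1 = r g * y := by
  rw [tsMul_apply_one, sum_eq_single g]
  · simp [tsDual, mul_assoc]
  · intro h _ hh
    simp [tsDual, hh]
  · simp

lemma sum_tsDual [Fintype G] (x : G → K) :
    ∑ g : G, tsDual Θ α g (Θ g (x g⁻¹) * (α g g⁻¹ : K)) = x := by
  have hsingle : ∀ g : G,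
      tsDual Θ α g (Θ g (x g⁻¹) * (α g g⁻¹ : K)) = Pi.single g⁻¹ (x g⁻¹) := fun g => by
    simp [tsDual]
  simp_rw [hsingle]
  exact (Fintype.sum_equiv (Equiv.inv G) _ (fun h => Pi.single h (x h)) fun _ => rfl).trans
    (univ_sum_single x)

lemma tsMul_apply_one_injective [Fintype G] {χ : AddChar K ℂˣ}
    (hχ : Function.Injective χ.mulShift) {r r' : G → K}
    (h : ∀ x : G → K, χ (tsMul Θ α r x 1) = χ (tsMul Θ α r' x 1)) : r = r' := by
  funext g
  refine hχ (DFunLike.ext _ _ fun y => ?_)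
  simpa [tsMul_tsDual_apply_one] using h (tsDual Θ α g y)

lemma exists_eq_tsMul_apply_one [Fintype K] [Fintype G] {χ : AddChar K ℂˣ}
    (hχ : Function.Injective χ.mulShift) (ψ : AddChar (G → K) ℂˣ) :
    ∃ r : G → K, ∀ x : G → K, ψ x = χ (tsMul Θ α r x 1) := by
  have hψ_tsDual : ∀ g : G, ∃ a : K, χ.mulShift a =
      AddChar.ofMapAddEqMul (ψ ∘ tsDual Θ α g) fun y z => by
        simp only [Function.comp_apply, tsDual_add, AddChar.map_add_eq_mul] :=
    fun g => AddChar.mulShift_surjective_of_injective hχ _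
  choose r hr using hψ_tsDual
  refine ⟨r, fun x => ?_⟩
  calc ψ x = ψ (∑ g : G, tsDual Θ α g (Θ g (x g⁻¹) * (α g g⁻¹ : K))) := by rw [sum_tsDual]
    _ = ∏ g : G, χ (r g * (Θ g (x g⁻¹) * (α g g⁻¹ : K))) := by
      rw [AddChar.map_sum_eq_prod]
      exact prod_congr rfl fun g _ => (DFunLike.congr_fun (hr g) _).symm
    _ = χ (tsMul Θ α r x 1) := by
      simp only [tsMul_apply_one, AddChar.map_sum_eq_prod, mul_assoc]

end TwistedSkewGroupRing

theorem stmt2_general [Field K] [Fintype K] [Group G] [Fintype G] [DecidableEq G]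
    (Θ : G →* RingAut K) (α : G → G → Kˣ)
    (χK : K → ℂˣ)
    (hχadd : ∀ x y : K, χK (x + y) = χK x * χK y)
    (hχinj : ∀ x x' : K, (∀ y : K, χK (x * y) = χK (x' * y)) → x = x') :
    (∀ r r' : G → K,
        (∀ x : G → K, χK (tsMul Θ α r x 1) = χK (tsMul Θ α r' x 1)) → r = r') ∧
    (∀ ψ : (G → K) → ℂˣ, (∀ x y : G → K, ψ (x + y) = ψ x * ψ y) →
        ∃ r : G → K, ∀ x : G → K, ψ x = χK (tsMul Θ α r x 1)) := by
  let χ := AddChar.ofMapAddEqMul χK hχadd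
  have hχ : Function.Injective χ.mulShift := fun a b h =>
    hχinj a b fun y => DFunLike.congr_fun h y
  exact ⟨fun r r' h => tsMul_apply_one_injective Θ α hχ h,
    fun ψ hψ => exists_eq_tsMul_apply_one Θ α hχ (AddChar.ofMapAddEqMul ψ hψ)⟩

/-- Given a generating additive character `χ_K : K → ℂ^×` of `K`,
define `χ_R(Σ_g a_g ḡ) = χ_K(a_1)`.  Then the map `r ↦ (x ↦ χ_R(r·x))` is an injection
of `R` into the additive characters of `R`, and it is also surjective onto them;
since `(χ_R·r)(x) = χ_R(r·x)` this map is right-`R`-linear, so `R ≅ R̂` as right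
`R`-modules, i.e. `R` is a Frobenius ring. -/
theorem stmt2 [Field K] [Fintype K] [Group G] [Fintype G] [DecidableEq G]
    (Θ : G →* RingAut K) (α : G → G → Kˣ)
    (hnorm : ∀ g : G, α g 1 = 1 ∧ α 1 g = 1)
    (hcoc : ∀ g₁ g₂ g₃ : G, α g₁ (g₂ * g₃) * α g₂ g₃ = α (g₁ * g₂) g₃ * α g₁ g₂)
    (hstab : ∀ g x y : G, Θ g ((α x y : K)) = (α x y : K))
    (χK : K → ℂˣ)
    (hχadd : ∀ x y : K, χK (x + y) = χK x * χK y)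
    (hχinj : ∀ x x' : K, (∀ y : K, χK (x * y) = χK (x' * y)) → x = x') :
    (∀ r r' : G → K,
        (∀ x : G → K, χK (tsMul Θ α r x 1) = χK (tsMul Θ α r' x 1)) → r = r') ∧
    (∀ ψ : (G → K) → ℂˣ, (∀ x y : G → K, ψ (x + y) = ψ x * ψ y) →
        ∃ r : G → K, ∀ x : G → K, ψ x = χK (tsMul Θ α r x 1)) :=
  stmt2_general Θ α χK hχadd hχinj
end

section
/- (Maschke's theorem for twisted skew group rings.) If the characteristic of K does not divide the order of G, then the twisted skew group ring R = K[G,Θ,α] is a semisimple ring. -/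
open Finset

variable {K : Type*} {G : Type*}

/-! Maschke's averaging argument. Left multiplication by `ḡ` is a `Θ g`-semilinear bijection of
`R`. Conjugating a `K`-linear projection `p` onto a left ideal `C` by these bijections and averaging
over `G` gives `(1/|G|) Σ_g ḡ⁻¹ p ḡ`, again a projection onto `C`; since `α` is a `Θ`-invariant
2-cocycle, reindexing the sum shows that it commutes with every left multiplication, so its kernel
is a left ideal complementing `C`. -/

section Cocycle

variable {M : Type*} [CommGroup M] [Group G] (α : G → G → M)

theorem cocycle_inv_self_eq (hnorm : ∀ g : G, α g 1 = 1 ∧ α 1 g = 1)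
    (hcoc : ∀ g₁ g₂ g₃ : G, α g₁ (g₂ * g₃) * α g₂ g₃ = α (g₁ * g₂) g₃ * α g₁ g₂) (g : G) :
    α g⁻¹ g = α g g⁻¹ := by
  simpa [(hnorm g).1, (hnorm g).2] using hcoc g g⁻¹ g

theorem cocycle_div_inv_self_eq (hnorm : ∀ g : G, α g 1 = 1 ∧ α 1 g = 1)
    (hcoc : ∀ g₁ g₂ g₃ : G, α g₁ (g₂ * g₃) * α g₂ g₃ = α (g₁ * g₂) g₃ * α g₁ g₂) (g h : G) :
    α g h / α g⁻¹ g = α h (g * h)⁻¹ / α (g * h)⁻¹ (g * h) := by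
  have hgh := hcoc g h (g * h)⁻¹
  rw [show h * (g * h)⁻¹ = g⁻¹ by group] at hgh
  rw [cocycle_inv_self_eq α hnorm hcoc, cocycle_inv_self_eq α hnorm hcoc,
    div_eq_div_iff_mul_eq_mul, mul_comm (α h _), hgh, mul_comm]

end Cocycle

section TwistedSkewGroupRing

variable [Field K] [Group G] (Θ : G →* RingAut K) (α : G → G → Kˣ)

-- `tsLeft Θ α g v` is the product `ḡ · v` in `K[G,Θ,α]`.
def tsLeft (g : G) : (G → K) →ₛₗ[(Θ g : K →+* K)] (G → K) where
  toFun v x := Θ g (v (g⁻¹ * x)) * α g (g⁻¹ * x)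
  map_add' v w := by funext x; simp [add_mul]
  map_smul' c v := by funext x; simp [mul_assoc]

theorem tsLeft_apply (g : G) (v : G → K) (x : G) :
    tsLeft Θ α g v x = Θ g (v (g⁻¹ * x)) * α g (g⁻¹ * x) := rfl

theorem tsLeft_one (hnorm : ∀ g : G, α g 1 = 1 ∧ α 1 g = 1) (v : G → K) :
    tsLeft Θ α 1 v = v := by
  funext x
  simp [tsLeft_apply, (hnorm x).2]

theorem tsLeft_tsLeft
    (hcoc : ∀ g₁ g₂ g₃ : G, α g₁ (g₂ * g₃) * α g₂ g₃ = α (g₁ * g₂) g₃ * α g₁ g₂)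
    (hstab : ∀ g x y : G, Θ g ((α x y : K)) = (α x y : K)) (g h : G) (v : G → K) :
    tsLeft Θ α g (tsLeft Θ α h v) = (α g h : K) • tsLeft Θ α (g * h) v := by
  funext x
  have hc := congrArg Units.val (hcoc g h ((g * h)⁻¹ * x))
  rw [show h * ((g * h)⁻¹ * x) = g⁻¹ * x by group] at hc
  push_cast at hc
  simp only [tsLeft_apply, Pi.smul_apply, smul_eq_mul, map_mul, hstab,
    show h⁻¹ * (g⁻¹ * x) = (g * h)⁻¹ * x by group, RingAut.mul_apply]
  linear_combination Θ g (Θ h (v ((g * h)⁻¹ * x))) * hc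

variable [Fintype G]

-- `(α g⁻¹ g)⁻¹ • tsLeft Θ α g⁻¹` is the inverse of `tsLeft Θ α g`.
def tsAverage (p : (G → K) →ₗ[K] (G → K)) : (G → K) →ₗ[K] (G → K) where
  toFun v := (Fintype.card G : K)⁻¹ •
    ∑ g, (α g⁻¹ g : K)⁻¹ • tsLeft Θ α g⁻¹ (p (tsLeft Θ α g v))
  map_add' v w := by simp only [map_add, smul_add, Finset.sum_add_distrib]
  map_smul' c v := by
    have hΘ : ∀ g : G, Θ g⁻¹ (Θ g c) = c := fun g => by
      rw [← RingAut.mul_apply, ← map_mul, inv_mul_cancel, map_one, RingAut.one_apply]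
    simp only [map_smulₛₗ, RingEquiv.coe_toRingHom, RingHom.id_apply, hΘ]
    simp only [Finset.smul_sum, smul_comm c]

theorem tsAverage_apply (p : (G → K) →ₗ[K] (G → K)) (v : G → K) :
    tsAverage Θ α p v = (Fintype.card G : K)⁻¹ •
      ∑ g, (α g⁻¹ g : K)⁻¹ • tsLeft Θ α g⁻¹ (p (tsLeft Θ α g v)) := rfl

theorem tsAverage_mem {C : Submodule K (G → K)}
    (hC : ∀ g, ∀ c ∈ C, tsLeft Θ α g c ∈ C)
    {p : (G → K) →ₗ[K] (G → K)} (hp : ∀ v, p v ∈ C) (v : G → K) : tsAverage Θ α p v ∈ C :=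
  C.smul_mem _ <| C.sum_mem fun _ _ => C.smul_mem _ <| hC _ _ (hp _)

theorem tsAverage_eq_self (hnorm : ∀ g : G, α g 1 = 1 ∧ α 1 g = 1)
    (hcoc : ∀ g₁ g₂ g₃ : G, α g₁ (g₂ * g₃) * α g₂ g₃ = α (g₁ * g₂) g₃ * α g₁ g₂)
    (hstab : ∀ g x y : G, Θ g ((α x y : K)) = (α x y : K)) (hG : (Fintype.card G : K) ≠ 0)
    {C : Submodule K (G → K)} (hC : ∀ g, ∀ c ∈ C, tsLeft Θ α g c ∈ C)
    {p : (G → K) →ₗ[K] (G → K)} (hp : ∀ c ∈ C, p c = c) {c : G → K} (hc : c ∈ C) :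
    tsAverage Θ α p c = c := by
  have hterm : ∀ g : G, (α g⁻¹ g : K)⁻¹ • tsLeft Θ α g⁻¹ (p (tsLeft Θ α g c)) = c := fun g => by
    rw [hp _ (hC g c hc), tsLeft_tsLeft Θ α hcoc hstab, inv_mul_cancel, tsLeft_one Θ α hnorm,
      inv_smul_smul₀ (Units.ne_zero _)]
  rw [tsAverage_apply, Fintype.sum_congr _ _ hterm, Finset.sum_const, Finset.card_univ,
    ← Nat.cast_smul_eq_nsmul K, inv_smul_smul₀ hG]

theorem tsAverage_tsLeft (hnorm : ∀ g : G, α g 1 = 1 ∧ α 1 g = 1)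
    (hcoc : ∀ g₁ g₂ g₃ : G, α g₁ (g₂ * g₃) * α g₂ g₃ = α (g₁ * g₂) g₃ * α g₁ g₂)
    (hstab : ∀ g x y : G, Θ g ((α x y : K)) = (α x y : K)) (p : (G → K) →ₗ[K] (G → K))
    (h : G) (v : G → K) :
    tsAverage Θ α p (tsLeft Θ α h v) = tsLeft Θ α h (tsAverage Θ α p v) := by
  have hfix : ∀ g x y : G, Θ g (α x y : K)⁻¹ = (α x y : K)⁻¹ := fun g x y => by
    rw [map_inv₀, hstab]
  have hcard : Θ h (Fintype.card G : K)⁻¹ = (Fintype.card G : K)⁻¹ := by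
    rw [map_inv₀, map_natCast]
  rw [tsAverage_apply, tsAverage_apply, map_smulₛₗ, map_sum, RingEquiv.coe_toRingHom, hcard]
  congr 1
  simp only [tsLeft_tsLeft Θ α hcoc hstab, map_smulₛₗ, RingEquiv.coe_toRingHom, RingHom.id_apply,
    hstab, hfix, smul_smul]
  refine Fintype.sum_equiv (Equiv.mulRight h) _ _ fun g => ?_
  have hα : (α g h : K) / α g⁻¹ g = α h (g * h)⁻¹ / α (g * h)⁻¹ (g * h) := by
    exact_mod_cast congrArg Units.val (cocycle_div_inv_self_eq α hnorm hcoc g h)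
  rw [Equiv.coe_mulRight, show h * (g * h)⁻¹ = g⁻¹ by group, inv_mul_eq_div, inv_mul_eq_div, hα]

variable [DecidableEq G]

theorem tsMul_eq_sum (a b : G → K) :
    tsMul Θ α a b = ∑ g, a g • tsLeft Θ α g b := by
  funext x
  rw [tsMul, Fintype.sum_prod_type, Finset.sum_apply]
  refine Finset.sum_congr rfl fun g _ => ?_
  simp_rw [← eq_inv_mul_iff_mul_eq, Finset.sum_ite_eq', Finset.mem_univ, if_true]
  simp only [Pi.smul_apply, smul_eq_mul, tsLeft_apply, mul_assoc]

theorem tsMul_single (g : G) (v : G → K) :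
    tsMul Θ α (Pi.single g 1) v = tsLeft Θ α g v := by
  simp [tsMul_eq_sum, Pi.single_apply]

theorem tsMul_zero (a : G → K) : tsMul Θ α a 0 = 0 := by
  simp [tsMul_eq_sum]

theorem tsAverage_tsMul (hnorm : ∀ g : G, α g 1 = 1 ∧ α 1 g = 1)
    (hcoc : ∀ g₁ g₂ g₃ : G, α g₁ (g₂ * g₃) * α g₂ g₃ = α (g₁ * g₂) g₃ * α g₁ g₂)
    (hstab : ∀ g x y : G, Θ g ((α x y : K)) = (α x y : K)) (p : (G → K) →ₗ[K] (G → K))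
    (r v : G → K) :
    tsAverage Θ α p (tsMul Θ α r v) = tsMul Θ α r (tsAverage Θ α p v) := by
  simp only [tsMul_eq_sum, map_sum, map_smul, tsAverage_tsLeft Θ α hnorm hcoc hstab]

end TwistedSkewGroupRing

theorem stmt3_general [Field K] [Group G] [Fintype G] [DecidableEq G]
    (Θ : G →* RingAut K) (α : G → G → Kˣ)
    (hnorm : ∀ g : G, α g 1 = 1 ∧ α 1 g = 1)
    (hcoc : ∀ g₁ g₂ g₃ : G, α g₁ (g₂ * g₃) * α g₂ g₃ = α (g₁ * g₂) g₃ * α g₁ g₂)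
    (hstab : ∀ g x y : G, Θ g ((α x y : K)) = (α x y : K))
    (hchar : ¬ (ringChar K ∣ Fintype.card G)) :
    ∀ C : Submodule K (G → K), (∀ r : G → K, ∀ c ∈ C, tsMul Θ α r c ∈ C) →
      ∃ D : Submodule K (G → K), (∀ r : G → K, ∀ d ∈ D, tsMul Θ α r d ∈ D) ∧
        C ⊓ D = ⊥ ∧ C ⊔ D = ⊤ := by
  intro C hC
  have hG : (Fintype.card G : K) ≠ 0 := mt (CharP.cast_eq_zero_iff K (ringChar K) _).mp hchar
  have hCleft : ∀ g, ∀ c ∈ C, tsLeft Θ α g c ∈ C := fun g c hc =>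
    tsMul_single Θ α g c ▸ hC _ c hc
  obtain ⟨q, hq⟩ := C.subtype.exists_leftInverse_of_injective C.ker_subtype
  set F := tsAverage Θ α (C.subtype ∘ₗ q)
  have hFC : ∀ v, F v ∈ C := tsAverage_mem Θ α hCleft fun v => (q v).2
  have hFid : ∀ c ∈ C, F c = c := fun c hc =>
    tsAverage_eq_self Θ α hnorm hcoc hstab hG hCleft
      (fun c hc => congrArg Subtype.val (LinearMap.congr_fun hq ⟨c, hc⟩)) hc
  have hcompl : IsCompl C (LinearMap.ker F) := by
    simpa only [LinearMap.ker_codRestrict] using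
      LinearMap.isCompl_of_proj (f := F.codRestrict C hFC) fun c => Subtype.ext (hFid c c.2)
  refine ⟨LinearMap.ker F, fun r d hd => ?_, hcompl.inf_eq_bot, hcompl.sup_eq_top⟩
  rw [LinearMap.mem_ker] at hd ⊢
  rw [tsAverage_tsMul Θ α hnorm hcoc hstab, hd, tsMul_zero]

/-- **Maschke.** If `char K ∤ |G|`, then `R = K[G,Θ,α]` is semisimple:
every left ideal of `R` (a `K`-subspace closed under left multiplication) admits a
left-ideal complement. -/
theorem stmt3 [Field K] [Fintype K] [Group G] [Fintype G] [DecidableEq G]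
    (Θ : G →* RingAut K) (α : G → G → Kˣ)
    (hnorm : ∀ g : G, α g 1 = 1 ∧ α 1 g = 1)
    (hcoc : ∀ g₁ g₂ g₃ : G, α g₁ (g₂ * g₃) * α g₂ g₃ = α (g₁ * g₂) g₃ * α g₁ g₂)
    (hstab : ∀ g x y : G, Θ g ((α x y : K)) = (α x y : K))
    (hchar : ¬ (ringChar K ∣ Fintype.card G)) :
    ∀ C : Submodule K (G → K), (∀ r : G → K, ∀ c ∈ C, tsMul Θ α r c ∈ C) →
      ∃ D : Submodule K (G → K), (∀ r : G → K, ∀ d ∈ D, tsMul Θ α r d ∈ D) ∧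
        C ⊓ D = ⊥ ∧ C ⊔ D = ⊤ :=
  stmt3_general Θ α hnorm hcoc hstab hchar
end

section
/- The adjoint map a ↦ â from K[G,Θ,α] to K[G,Θ,α⁻¹] is an additive bijection that preserves Hamming weight, maps 1̄ to 1̄, and is a ring anti-homomorphism: for all a, b ∈ K[G,Θ,α], the adjoint of a·b (product in K[G,Θ,α]) equals b̂·â (product in K[G,Θ,α⁻¹]). -/
/-!
In coordinates `â x = Θ x (a x⁻¹) * α(x⁻¹, x)`: an injective map applied coordinatewise after
reindexing by `x ↦ x⁻¹`, which gives additivity and preservation of weight. The adjoint for `α⁻¹`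
inverts it, because normalization and the cocycle relation force `α(x, x⁻¹) = α(x⁻¹, x)`.
For anti-multiplicativity, reindex the sum defining `(b̂ * â) x` by `(g, h) ↦ (h⁻¹, g⁻¹)`; the
terms then agree one by one thanks to the identity
`α(g, h) α(gh, (gh)⁻¹) α(h⁻¹, g⁻¹) = α(h, h⁻¹) α(g, g⁻¹)` (two instances of the cocycle relation),
the stability of `α` under `Θ` letting cocycle values pass through the automorphisms.
-/

open Finset

variable {K : Type*} {G : Type*}

theorem hammingNorm_comp_equiv {ι β : Type*} [Fintype ι] [Zero β] [DecidableEq β]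
    (e : ι ≃ ι) (x : ι → β) : hammingNorm (x ∘ e) = hammingNorm x :=
  Finset.card_equiv e (by simp)

section Cocycle

variable {A : Type*} [CommGroup A] [Group G] {α : G → G → A}

theorem cocycle_mul_inv_symm (hnorm : ∀ g : G, α g 1 = 1 ∧ α 1 g = 1)
    (hcoc : ∀ g₁ g₂ g₃ : G, α g₁ (g₂ * g₃) * α g₂ g₃ = α (g₁ * g₂) g₃ * α g₁ g₂) (x : G) :
    α x x⁻¹ = α x⁻¹ x := by
  simpa [hnorm] using (hcoc x x⁻¹ x).symm

theorem cocycle_mul_mul_inv_rev (hnorm : ∀ g : G, α g 1 = 1 ∧ α 1 g = 1)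
    (hcoc : ∀ g₁ g₂ g₃ : G, α g₁ (g₂ * g₃) * α g₂ g₃ = α (g₁ * g₂) g₃ * α g₁ g₂) (g h : G) :
    α g h * α (g * h) (h⁻¹ * g⁻¹) * α h⁻¹ g⁻¹ = α h h⁻¹ * α g g⁻¹ :=
  calc α g h * α (g * h) (h⁻¹ * g⁻¹) * α h⁻¹ g⁻¹
      = α g (h * (h⁻¹ * g⁻¹)) * (α h (h⁻¹ * g⁻¹) * α h⁻¹ g⁻¹) := by
        rw [mul_comm (α g h), ← hcoc, mul_assoc]
    _ = α g g⁻¹ * (α (h * h⁻¹) g⁻¹ * α h h⁻¹) := by rw [hcoc, mul_inv_cancel_left]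
    _ = α h h⁻¹ * α g g⁻¹ := by rw [mul_inv_cancel, (hnorm _).2, one_mul, mul_comm]

end Cocycle

section Adjoint

variable [Field K] [Group G] (Θ : G →* RingAut K) (α : G → G → Kˣ)

theorem ringAut_hom_apply_apply (x y : G) (c : K) : Θ x (Θ y c) = Θ (x * y) c := by
  rw [map_mul]; rfl

theorem tsAdj_add (a b : G → K) : tsAdj Θ α (a + b) = tsAdj Θ α a + tsAdj Θ α b := by
  funext x; simp [tsAdj, add_mul]

theorem hammingNorm_tsAdj [Fintype G] [DecidableEq K] (a : G → K) :
    hammingNorm (tsAdj Θ α a) = hammingNorm a := by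
  have hinj : ∀ x : G, Function.Injective fun c => Θ x c * (α x⁻¹ x : K) := fun x =>
    (mul_left_injective₀ (Units.ne_zero _)).comp (Θ x).injective
  rw [← hammingNorm_comp_equiv (Equiv.inv G) a]
  exact hammingNorm_comp (fun x c => Θ x c * (α x⁻¹ x : K)) hinj (by simp)

theorem tsAdj_tsOne [DecidableEq G] (h : α 1 1 = 1) : tsAdj Θ α tsOne = tsOne := by
  funext x
  by_cases hx : x = 1
  · simp [tsAdj, tsOne, hx, h]
  · simp [tsAdj, tsOne, hx]

theorem tsAdj_inv_tsAdj (hsymm : ∀ x : G, α x x⁻¹ = α x⁻¹ x)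
    (hstab : ∀ g x y : G, Θ g ((α x y : K)) = (α x y : K)) (a : G → K) :
    tsAdj Θ (fun x y => (α x y)⁻¹) (tsAdj Θ α a) = a := by
  funext x
  simp [tsAdj, hstab, hsymm]

theorem tsAdj_tsAdj_inv (hsymm : ∀ x : G, α x x⁻¹ = α x⁻¹ x)
    (hstab : ∀ g x y : G, Θ g ((α x y : K)) = (α x y : K)) (b : G → K) :
    tsAdj Θ α (tsAdj Θ (fun x y => (α x y)⁻¹) b) = b := by
  simpa only [inv_inv] using
    tsAdj_inv_tsAdj Θ (fun x y => (α x y)⁻¹) (by simp [hsymm]) (by simp [hstab]) b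

theorem tsAdj_bijective (hsymm : ∀ x : G, α x x⁻¹ = α x⁻¹ x)
    (hstab : ∀ g x y : G, Θ g ((α x y : K)) = (α x y : K)) : Function.Bijective (tsAdj Θ α) :=
  Function.bijective_iff_has_inverse.mpr ⟨_, tsAdj_inv_tsAdj Θ α hsymm hstab,
    tsAdj_tsAdj_inv Θ α hsymm hstab⟩

theorem tsAdj_tsMul [Fintype G] [DecidableEq G]
    (hadj : ∀ g h : G, α g h * α (g * h) (h⁻¹ * g⁻¹) * α h⁻¹ g⁻¹ = α h h⁻¹ * α g g⁻¹)
    (hstab : ∀ g x y : G, Θ g ((α x y : K)) = (α x y : K)) (a b : G → K) :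
    tsAdj Θ α (tsMul Θ α a b) = tsMul Θ (fun x y => (α x y)⁻¹) (tsAdj Θ α b) (tsAdj Θ α a) := by
  funext x
  simp only [tsAdj, tsMul, map_sum, Finset.sum_mul]
  refine Fintype.sum_equiv ((Equiv.prodComm G G).trans ((Equiv.inv G).prodCongr (Equiv.inv G)))
    _ _ fun ⟨g, h⟩ => ?_
  by_cases hgh : g * h = x⁻¹
  · have hx : h⁻¹ * g⁻¹ = x := by rw [← mul_inv_rev, hgh, inv_inv]
    simp only [Equiv.trans_apply, Equiv.prodComm_apply, Prod.swap_prod_mk, Equiv.prodCongr_apply,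
      Prod.map_apply, Equiv.inv_apply, inv_inv, if_pos hgh, if_pos hx]
    subst hx
    have hK := congrArg Units.val (hadj g h)
    push_cast at hK
    simp only [map_mul (Θ _), ringAut_hom_apply_apply, hstab, Units.val_inv_eq_inv_val, mul_inv_rev,
      inv_inv, inv_mul_cancel_right]
    field_simp
    linear_combination Θ (h⁻¹ * g⁻¹) (a g) * Θ h⁻¹ (b h) * hK
  · have hgh' : h⁻¹ * g⁻¹ ≠ x := fun hx => hgh (by rw [← hx]; group)
    simp [hgh, hgh']

end Adjoint

theorem stmt4_general [Field K] [DecidableEq K] [Group G] [Fintype G] [DecidableEq G]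
    (Θ : G →* RingAut K) (α : G → G → Kˣ)
    (hnorm : ∀ g : G, α g 1 = 1 ∧ α 1 g = 1)
    (hcoc : ∀ g₁ g₂ g₃ : G, α g₁ (g₂ * g₃) * α g₂ g₃ = α (g₁ * g₂) g₃ * α g₁ g₂)
    (hstab : ∀ g x y : G, Θ g ((α x y : K)) = (α x y : K)) :
    (∀ a b : G → K, tsAdj Θ α (a + b) = tsAdj Θ α a + tsAdj Θ α b) ∧
    Function.Bijective (tsAdj Θ α) ∧
    (∀ a : G → K, hammingNorm (tsAdj Θ α a) = hammingNorm a) ∧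
    tsAdj Θ α tsOne = tsOne ∧
    (∀ a b : G → K,
        tsAdj Θ α (tsMul Θ α a b) =
          tsMul Θ (fun x y => (α x y)⁻¹) (tsAdj Θ α b) (tsAdj Θ α a)) :=
  ⟨tsAdj_add Θ α,
    tsAdj_bijective Θ α (cocycle_mul_inv_symm hnorm hcoc) hstab,
    hammingNorm_tsAdj Θ α,
    tsAdj_tsOne Θ α (hnorm 1).1,
    tsAdj_tsMul Θ α (cocycle_mul_mul_inv_rev hnorm hcoc) hstab⟩

/-- The adjoint map `a ↦ â` from `K[G,Θ,α]` to `K[G,Θ,α⁻¹]` is an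
additive, Hamming-weight-preserving bijection sending `1̄` to `1̄`, and it is a ring
anti-homomorphism: the adjoint of `a·b` (product in `K[G,Θ,α]`) equals `b̂·â`
(product in `K[G,Θ,α⁻¹]`). -/
theorem stmt4 [Field K] [Fintype K] [DecidableEq K] [Group G] [Fintype G] [DecidableEq G]
    (Θ : G →* RingAut K) (α : G → G → Kˣ)
    (hnorm : ∀ g : G, α g 1 = 1 ∧ α 1 g = 1)
    (hcoc : ∀ g₁ g₂ g₃ : G, α g₁ (g₂ * g₃) * α g₂ g₃ = α (g₁ * g₂) g₃ * α g₁ g₂)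
    (hstab : ∀ g x y : G, Θ g ((α x y : K)) = (α x y : K)) :
    (∀ a b : G → K, tsAdj Θ α (a + b) = tsAdj Θ α a + tsAdj Θ α b) ∧
    Function.Bijective (tsAdj Θ α) ∧
    (∀ a : G → K, hammingNorm (tsAdj Θ α a) = hammingNorm a) ∧
    tsAdj Θ α tsOne = tsOne ∧
    (∀ a b : G → K,
        tsAdj Θ α (tsMul Θ α a b) =
          tsMul Θ (fun x y => (α x y)⁻¹) (tsAdj Θ α b) (tsAdj Θ α a)) :=
  stmt4_general Θ α hnorm hcoc hstab
end

section
/- If the normalized 2-cocycle α satisfies α = α⁻¹ (i.e. α(x,y)² = 1 for all x,y ∈ G, so that K[G,Θ,α⁻¹] = K[G,Θ,α]), then the adjoint map is an involution: for every a ∈ R = K[G,Θ,α] one has â̂ = a. -/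
/-
Unfolding the adjoint twice gives `â̂(x) = a(x) · Θ(x)(α(x,x⁻¹)) · α(x⁻¹,x)`. The cocycle identity at
`(x, x⁻¹, x)` together with normalization gives `α(x⁻¹,x) = α(x,x⁻¹)`, and since `α(x,x⁻¹) = ±1` it is
fixed by every ring automorphism, so the factor is `α(x,x⁻¹)² = 1`.
-/

open Finset

variable {K : Type*} {G : Type*}

theorem map_eq_self_of_sq_eq_one {R F : Type*} [Ring R] [NoZeroDivisors R] [FunLike F R R]
    [RingHomClass F R R] (σ : F) {r : R} (hr : r ^ 2 = 1) : σ r = r := by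
  rcases sq_eq_one_iff.mp hr with rfl | rfl <;> simp

theorem cocycle_inv_mul_eq {M : Type*} [Monoid M] [Group G] (α : G → G → M)
    (hright : ∀ g, α g 1 = 1) (hleft : ∀ g, α 1 g = 1)
    (hcoc : ∀ g₁ g₂ g₃ : G, α g₁ (g₂ * g₃) * α g₂ g₃ = α (g₁ * g₂) g₃ * α g₁ g₂) (x : G) :
    α x⁻¹ x = α x x⁻¹ := by
  simpa [hright, hleft] using hcoc x x⁻¹ x

theorem tsAdj_tsAdj_apply [Field K] [Group G] (Θ : G →* RingAut K) (α : G → G → Kˣ)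
    (a : G → K) (x : G) :
    tsAdj Θ α (tsAdj Θ α a) x = a x * (Θ x (α x x⁻¹ : K) * (α x⁻¹ x : K)) := by
  simp only [tsAdj, inv_inv, map_mul, map_inv, RingAut.inv_apply,
    RingEquiv.apply_symm_apply, mul_assoc]

theorem stmt5_general [Field K] [Group G]
    (Θ : G →* RingAut K) (α : G → G → Kˣ)
    (hnorm : ∀ g : G, α g 1 = 1 ∧ α 1 g = 1)
    (hcoc : ∀ g₁ g₂ g₃ : G, α g₁ (g₂ * g₃) * α g₂ g₃ = α (g₁ * g₂) g₃ * α g₁ g₂)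
    (hα2 : ∀ x y : G, (α x y : K) ^ 2 = 1) :
    ∀ a : G → K, tsAdj Θ α (tsAdj Θ α a) = a := by
  intro a
  funext x
  rw [tsAdj_tsAdj_apply, map_eq_self_of_sq_eq_one _ (hα2 x x⁻¹),
    cocycle_inv_mul_eq α (fun g => (hnorm g).1) (fun g => (hnorm g).2) hcoc x, ← sq, hα2, mul_one]

/-- If the normalized 2-cocycle `α` satisfies `α = α⁻¹`
(i.e. `α(x,y)² = 1` for all `x,y`), so that `K[G,Θ,α⁻¹] = K[G,Θ,α]`, then the
adjoint map is an involution: `â̂ = a` for every `a ∈ R`. -/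
theorem stmt5 [Field K] [Fintype K] [Group G] [Fintype G] [DecidableEq G]
    (Θ : G →* RingAut K) (α : G → G → Kˣ)
    (hnorm : ∀ g : G, α g 1 = 1 ∧ α 1 g = 1)
    (hcoc : ∀ g₁ g₂ g₃ : G, α g₁ (g₂ * g₃) * α g₂ g₃ = α (g₁ * g₂) g₃ * α g₁ g₂)
    (hstab : ∀ g x y : G, Θ g ((α x y : K)) = (α x y : K))
    (hα2 : ∀ x y : G, (α x y : K) ^ 2 = 1) :
    ∀ a : G → K, tsAdj Θ α (tsAdj Θ α a) = a :=
  stmt5_general Θ α hnorm hcoc hα2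
end

section
/- Let G = ⟨g⟩ be cyclic of order n, Θ : G → Aut(K) a group homomorphism, and α a normalized 2-cocycle stabilized by Θ(G). Then there exist λ ∈ K^* fixed by Θ(g) and a map κ : G → K^* with κ(1) = 1 taking values in the fixed field of Θ(g), such that for all 0 ≤ i, j ≤ n−1, α(g^i, g^j) = κ(g^i)·κ(g^j)·κ(g^{i+j})⁻¹·α_λ(g^i, g^j), where α_λ(g^i, g^j) = 1 if 0 ≤ i+j < n and α_λ(g^i, g^j) = λ if n ≤ i+j ≤ 2(n−1). Consequently K[G,Θ,α] is isomorphic, via a K-left-linear distance-preserving ring isomorphism, to K[G,Θ,α_λ]; i.e. every twisted skew group code over a cyclic group is a skew λ-constacyclic code. -/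
/-!
Put `c(m) = ∏_{k<m} α(g^k, g)`. Induction on `j`, using the cocycle identity at `(g^i, g^j, g)`,
gives `α(g^i, g^j)·c(i)·c(j) = c(i+j)`, and `g^n = 1` gives `c(n+m) = c(n)·c(m)`. Hence
`κ(g^i) = c(i)⁻¹` for `0 ≤ i < n` and `λ = c(n)` satisfy `α = δκ·α_λ`. Since `κ` and `λ` are
products of values of `α`, they are fixed by all of `Θ(G)`; rescaling the basis `ḡ ↦ κ(g)·ḡ`
then turns the multiplication with `α` into the multiplication with `(δκ)⁻¹·α = α_λ`.
-/

open Finset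

variable {K : Type*} {G : Type*}

section Cochains

variable {M : Type*} [Monoid G]

def mulCoboundary [CommGroup M] (κ : G → M) (x y : G) : M := κ x * κ y * (κ (x * y))⁻¹

def powProd [CommMonoid M] (α : G → G → M) (g : G) (m : ℕ) : M :=
  ∏ k ∈ range m, α (g ^ k) g

section CommMonoid

variable [CommMonoid M] {α : G → G → M} {g : G}

theorem powProd_zero : powProd α g 0 = 1 := prod_range_zero _

theorem powProd_succ (m : ℕ) : powProd α g (m + 1) = powProd α g m * α (g ^ m) g :=
  prod_range_succ _ m

theorem powProd_add_of_pow_eq_one {n : ℕ} (hn : g ^ n = 1) (m : ℕ) :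
    powProd α g (n + m) = powProd α g n * powProd α g m := by
  rw [powProd, prod_range_add]
  congr 1
  exact prod_congr rfl fun k _ => by rw [pow_add, hn, one_mul]

theorem cocycle_pow_mul_powProd_mul_powProd (h1 : ∀ x, α x 1 = 1)
    (hcoc : ∀ x y z : G, α x (y * z) * α y z = α (x * y) z * α x y) (i j : ℕ) :
    α (g ^ i) (g ^ j) * powProd α g i * powProd α g j = powProd α g (i + j) := by
  induction j with
  | zero => simp [h1, powProd_zero]
  | succ j ih =>
    have step := hcoc (g ^ i) (g ^ j) g
    rw [← pow_succ, ← pow_add] at step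
    rw [powProd_succ, ← add_assoc, powProd_succ, ← ih]
    calc _ = α (g ^ i) (g ^ (j + 1)) * α (g ^ j) g * powProd α g i * powProd α g j := by ac_rfl
      _ = _ := by rw [step]; ac_rfl

theorem powProd_eq_powProd_mod_mul (i j : ℕ) (hi : i < orderOf g) (hj : j < orderOf g) :
    powProd α g (i + j) = powProd α g ((i + j) % orderOf g) *
      if i + j < orderOf g then 1 else powProd α g (orderOf g) := by
  split_ifs with h
  · rw [Nat.mod_eq_of_lt h, mul_one]
  · obtain ⟨d, hd⟩ : ∃ d, i + j = orderOf g + d := ⟨i + j - orderOf g, by omega⟩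
    rw [hd, Nat.add_mod_left, Nat.mod_eq_of_lt (by omega),
      powProd_add_of_pow_eq_one (pow_orderOf_eq_one g), mul_comm]

end CommMonoid

theorem cocycle_pow_eq_mulCoboundary_mul [CommGroup M] {α : G → G → M} {g : G}
    (h1 : ∀ x, α x 1 = 1) (hcoc : ∀ x y z : G, α x (y * z) * α y z = α (x * y) z * α x y)
    {κ : G → M} (hκ : ∀ m, κ (g ^ m) = (powProd α g (m % orderOf g))⁻¹) {i j : ℕ}
    (hi : i < orderOf g) (hj : j < orderOf g) :
    α (g ^ i) (g ^ j) = mulCoboundary κ (g ^ i) (g ^ j) *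
      if i + j < orderOf g then 1 else powProd α g (orderOf g) := by
  rw [mulCoboundary, ← pow_add, hκ, hκ, hκ, Nat.mod_eq_of_lt hi, Nat.mod_eq_of_lt hj, inv_inv,
    mul_assoc _ _ (ite _ _ _), ← powProd_eq_powProd_mod_mul i j hi hj,
    ← cocycle_pow_mul_powProd_mul_powProd h1 hcoc i j, eq_comm, ← mul_inv, inv_mul_eq_iff_eq_mul,
    mul_assoc, mul_comm]

end Cochains

theorem ringAut_apply_powProd [CommSemiring K] [Monoid G] {α : G → G → Kˣ} (σ : RingAut K)
    (hσ : ∀ x y, σ (α x y : K) = α x y) (g : G) (m : ℕ) :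
    σ ((powProd α g m : Kˣ) : K) = powProd α g m := by
  rw [powProd, Units.coe_prod, map_prod]
  exact prod_congr rfl fun k _ => hσ _ _

section TwistedSkewGroupRing

variable [Field K] [Group G] [Fintype G] [DecidableEq G]

theorem psiMap_id_apply (κ : G → Kˣ) (a : G → K) (x : G) : psiMap id κ a x = a x * κ x := by
  simp [psiMap]

theorem psiMap_id_tsMul (Θ : G →* RingAut K) (α : G → G → Kˣ) {κ : G → Kˣ}
    (hκ : ∀ x y, Θ x (κ y : K) = κ y) (a b : G → K) :
    psiMap id κ (tsMul Θ α a b) =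
      tsMul Θ (fun x y => (mulCoboundary κ x y)⁻¹ * α x y) (psiMap id κ a) (psiMap id κ b) := by
  funext x
  simp only [psiMap_id_apply, tsMul, sum_mul]
  refine sum_congr rfl fun p _ => ?_
  split_ifs with h
  · subst h
    simp only [mulCoboundary, map_mul, hκ, Units.val_mul, Units.val_inv_eq_inv_val, mul_inv_rev,
      inv_inv]
    field_simp
  · rw [zero_mul]

end TwistedSkewGroupRing

theorem stmt7_general [Field K] [Group G] [Fintype G] [DecidableEq G]
    (Θ : G →* RingAut K) (α : G → G → Kˣ)
    (hnorm : ∀ g : G, α g 1 = 1 ∧ α 1 g = 1)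
    (hcoc : ∀ g₁ g₂ g₃ : G, α g₁ (g₂ * g₃) * α g₂ g₃ = α (g₁ * g₂) g₃ * α g₁ g₂)
    (hstab : ∀ g x y : G, Θ g ((α x y : K)) = (α x y : K))
    (g : G) (hg : ∀ x : G, x ∈ Subgroup.zpowers g)
    (n : ℕ) (hn : n = Fintype.card G) :
    ∃ (lam : Kˣ) (κ : G → Kˣ),
      Θ g (lam : K) = (lam : K) ∧
      κ 1 = 1 ∧
      (∀ x : G, Θ g ((κ x : K)) = (κ x : K)) ∧
      (∀ i j : ℕ, i < n → j < n →
        (α (g ^ i) (g ^ j) : K) =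
          (κ (g ^ i) : K) * (κ (g ^ j) : K) * ((κ (g ^ (i + j)) : K))⁻¹ *
            (if i + j < n then 1 else (lam : K))) ∧
      ∃ αlam : G → G → Kˣ,
        (∀ i j : ℕ, i < n → j < n →
          αlam (g ^ i) (g ^ j) = if i + j < n then 1 else lam) ∧
        (∀ a b : G → K,
          psiMap id κ (tsMul Θ α a b) = tsMul Θ αlam (psiMap id κ a) (psiMap id κ b)) := by
  have hord : orderOf g = n := by
    rw [hn, ← Nat.card_eq_fintype_card]
    exact orderOf_eq_card_of_forall_mem_zpowers hg
  subst hord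
  have hfin : IsOfFinOrder g := isOfFinOrder_of_finite g
  set κ : G → Kˣ := fun x => (powProd α g ((finEquivZPowers hfin).symm ⟨x, hg x⟩))⁻¹
  have hκ (m : ℕ) : κ (g ^ m) = (powProd α g (m % orderOf g))⁻¹ := by
    simp only [κ, finEquivZPowers_symm_apply hfin m]
  have hfix (h x : G) : Θ h (κ x : K) = κ x := by
    simp only [κ, Units.val_inv_eq_inv_val, map_inv₀, ringAut_apply_powProd _ (hstab h)]
  have hcohom {i j : ℕ} (hi : i < orderOf g) (hj : j < orderOf g) :=
    cocycle_pow_eq_mulCoboundary_mul (fun x => (hnorm x).1) hcoc hκ hi hj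
  refine ⟨powProd α g (orderOf g), κ, ringAut_apply_powProd _ (hstab g) g _,
    by simpa [powProd_zero] using hκ 0, hfix g, fun i j hi hj => ?_, _, fun i j hi hj => ?_,
    psiMap_id_tsMul Θ α hfix⟩
  · have hval := congrArg Units.val (hcohom hi hj)
    split_ifs at hval ⊢ <;> simpa [mulCoboundary, ← pow_add] using hval
  · rw [hcohom hi hj, inv_mul_cancel_left]

/-- For `G = ⟨g⟩` cyclic of order `n`, any normalized 2-cocycle `α`
stabilized by `Θ(G)` is cohomologous (via a map `κ` with values in the fixed field
of `Θ(g)`) to the constacyclic cocycle `α_λ` for some `λ ∈ K^*` fixed by `Θ(g)`;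
consequently `K[G,Θ,α] ≅ K[G,Θ,α_λ]` via the `K`-left-linear, distance-preserving
ring isomorphism `a ḡ ↦ a·κ(g)·ḡ`, i.e. every twisted skew group code over a cyclic
group is a skew `λ`-constacyclic code. -/
theorem stmt7 [Field K] [Fintype K] [Group G] [Fintype G] [DecidableEq G]
    (Θ : G →* RingAut K) (α : G → G → Kˣ)
    (hnorm : ∀ g : G, α g 1 = 1 ∧ α 1 g = 1)
    (hcoc : ∀ g₁ g₂ g₃ : G, α g₁ (g₂ * g₃) * α g₂ g₃ = α (g₁ * g₂) g₃ * α g₁ g₂)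
    (hstab : ∀ g x y : G, Θ g ((α x y : K)) = (α x y : K))
    (g : G) (hg : ∀ x : G, x ∈ Subgroup.zpowers g)
    (n : ℕ) (hn : n = Fintype.card G) :
    ∃ (lam : Kˣ) (κ : G → Kˣ),
      Θ g (lam : K) = (lam : K) ∧
      κ 1 = 1 ∧
      (∀ x : G, Θ g ((κ x : K)) = (κ x : K)) ∧
      (∀ i j : ℕ, i < n → j < n →
        (α (g ^ i) (g ^ j) : K) =
          (κ (g ^ i) : K) * (κ (g ^ j) : K) * ((κ (g ^ (i + j)) : K))⁻¹ *
            (if i + j < n then 1 else (lam : K))) ∧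
      ∃ αlam : G → G → Kˣ,
        (∀ i j : ℕ, i < n → j < n →
          αlam (g ^ i) (g ^ j) = if i + j < n then 1 else lam) ∧
        (∀ a b : G → K,
          psiMap id κ (tsMul Θ α a b) = tsMul Θ αlam (psiMap id κ a) (psiMap id κ b)) :=
  stmt7_general Θ α hnorm hcoc hstab g hg n hn
end

section
/- If C is a nonzero left ideal of the twisted skew group ring R = K[G,Θ,α], then |G| ≤ d(C) · dim_K C, where d(C) is the minimum Hamming distance of C and dim_K C is its dimension as a K-vector space. -/
open Finset

variable {K : Type*} {G : Type*}

/-! The left translates `ḡ · c` of a codeword `c` of minimum weight `d` all lie in `C`, have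
weight `d`, and their supports `g · supp c` cover `G`. A basis of their span extracted from them
still covers `G` (a coordinate killed by the basis is killed by the whole span), so
`|G| ≤ d · dim span ≤ d · dim C`. -/

open Module Submodule

theorem card_le_sum_hammingNorm_of_forall_exists_ne_zero {ι M : Type*} [Fintype ι] [Zero M]
    [DecidableEq M] (s : Finset (ι → M)) (hcov : ∀ x, ∃ v ∈ s, v x ≠ 0) :
    Fintype.card ι ≤ ∑ v ∈ s, hammingNorm v := by
  classical
  have hunion : s.biUnion (fun v => univ.filter (v · ≠ 0)) = univ :=
    eq_univ_of_forall fun x => by simpa using hcov x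
  calc Fintype.card ι = #(s.biUnion fun v => univ.filter (v · ≠ 0)) := by rw [hunion, card_univ]
    _ ≤ ∑ v ∈ s, hammingNorm v := card_biUnion_le

theorem exists_mem_ne_zero_of_mem_span {ι R : Type*} [Semiring R] {s : Set (ι → R)} {v : ι → R}
    (hv : v ∈ span R s) {x : ι} (hvx : v x ≠ 0) : ∃ u ∈ s, u x ≠ 0 := by
  by_contra! h
  have hker : span R s ≤ LinearMap.ker (LinearMap.proj x : (ι → R) →ₗ[R] R) :=
    span_le.2 fun u hu => h u hu
  exact hvx (hker hv)

theorem card_le_mul_finrank_span {ι F : Type*} [Fintype ι] [DivisionRing F] [DecidableEq F]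
    (s : Finset (ι → F)) {d : ℕ} (hd : ∀ v ∈ s, hammingNorm v ≤ d)
    (hcov : ∀ x, ∃ v ∈ s, v x ≠ 0) :
    Fintype.card ι ≤ d * finrank F (span F (s : Set (ι → F))) := by
  classical
  obtain ⟨b, hbs, hspan, hli⟩ := exists_linearIndependent F (s : Set (ι → F))
  lift b to Finset (ι → F) using s.finite_toSet.subset hbs
  have hcovb : ∀ x, ∃ v ∈ b, v x ≠ 0 := fun x => by
    obtain ⟨v, hv, hvx⟩ := hcov x
    exact exists_mem_ne_zero_of_mem_span (hspan ▸ subset_span hv) hvx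
  calc Fintype.card ι ≤ ∑ v ∈ b, hammingNorm v :=
        card_le_sum_hammingNorm_of_forall_exists_ne_zero b hcovb
    _ ≤ ∑ _v ∈ b, d := sum_le_sum fun v hv => hd v (by exact_mod_cast hbs hv)
    _ = d * finrank F (span F (s : Set (ι → F))) := by
        rw [sum_const, smul_eq_mul, mul_comm, ← hspan, finrank_span_finset_eq_card hli]

section Translate

variable [Field K] [Group G] [Fintype G] [DecidableEq G] (Θ : G →* RingAut K) (α : G → G → Kˣ)

theorem tsMul_single_one_apply (c : G → K) (g x : G) :
    tsMul Θ α (Pi.single g 1) c x = Θ g (c (g⁻¹ * x)) * (α g (g⁻¹ * x) : K) := by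
  unfold tsMul
  rw [sum_eq_single (g, g⁻¹ * x)]
  · simp
  · rintro ⟨h, k⟩ - hne
    by_cases hh : h = g
    · subst hh
      have : h * k ≠ x := fun hk => hne (by rw [← hk, inv_mul_cancel_left])
      simp [this]
    · simp [hh]
  · simp

theorem tsMul_single_one_apply_ne_zero_iff (c : G → K) (g x : G) :
    tsMul Θ α (Pi.single g 1) c x ≠ 0 ↔ c (g⁻¹ * x) ≠ 0 := by
  simp [tsMul_single_one_apply, (α g (g⁻¹ * x)).ne_zero]

theorem hammingNorm_tsMul_single_one [DecidableEq K] (c : G → K) (g : G) :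
    hammingNorm (tsMul Θ α (Pi.single g 1) c) = hammingNorm c :=
  card_equiv (Equiv.mulLeft g⁻¹) fun x => by
    simpa using tsMul_single_one_apply_ne_zero_iff Θ α c g x

end Translate

theorem stmt8_general [Field K] [DecidableEq K] [Group G] [Fintype G] [DecidableEq G]
    (Θ : G →* RingAut K) (α : G → G → Kˣ)
    (C : Submodule K (G → K))
    (hC : ∀ r : G → K, ∀ c ∈ C, tsMul Θ α r c ∈ C)
    (d : ℕ) (hd : IsLeast {w : ℕ | ∃ c ∈ C, c ≠ 0 ∧ hammingNorm c = w} d) :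
    Fintype.card G ≤ d * Module.finrank K C := by
  classical
  obtain ⟨⟨c, hcC, hc0, rfl⟩, -⟩ := hd
  obtain ⟨t, ht⟩ := Function.ne_iff.1 hc0
  set s := univ.image fun g => tsMul Θ α (Pi.single g 1) c
  have hsC : span K (s : Set (G → K)) ≤ C :=
    span_le.2 fun v hv => by
      obtain ⟨g, -, rfl⟩ := mem_image.1 hv
      exact hC _ c hcC
  have hcov : ∀ x, ∃ v ∈ s, v x ≠ 0 := fun x =>
    ⟨_, mem_image_of_mem _ (mem_univ (x * t⁻¹)),
      (tsMul_single_one_apply_ne_zero_iff Θ α c _ x).2 (by simpa using ht)⟩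
  calc Fintype.card G ≤ hammingNorm c * finrank K (span K (s : Set (G → K))) :=
        card_le_mul_finrank_span s (by simp [s, hammingNorm_tsMul_single_one]) hcov
    _ ≤ hammingNorm c * finrank K C := Nat.mul_le_mul_left _ (Submodule.finrank_mono hsC)

/-- If `C ≠ 0` is a left ideal of `R = K[G,Θ,α]` with minimum
Hamming distance `d(C)`, then `|G| ≤ d(C) · dim_K C`. -/
theorem stmt8 [Field K] [Fintype K] [DecidableEq K] [Group G] [Fintype G] [DecidableEq G]
    (Θ : G →* RingAut K) (α : G → G → Kˣ)
    (hnorm : ∀ g : G, α g 1 = 1 ∧ α 1 g = 1)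
    (hcoc : ∀ g₁ g₂ g₃ : G, α g₁ (g₂ * g₃) * α g₂ g₃ = α (g₁ * g₂) g₃ * α g₁ g₂)
    (hstab : ∀ g x y : G, Θ g ((α x y : K)) = (α x y : K))
    (C : Submodule K (G → K))
    (hC : ∀ r : G → K, ∀ c ∈ C, tsMul Θ α r c ∈ C)
    (hC0 : C ≠ ⊥)
    (d : ℕ) (hd : IsLeast {w : ℕ | ∃ c ∈ C, c ≠ 0 ∧ hammingNorm c = w} d) :
    Fintype.card G ≤ d * Module.finrank K C :=
  stmt8_general Θ α C hC d hd
end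

section
/- Let K be a finite field and n ≥ 1. Every semilinear isometry of the Hamming space K^n is a semilinear monomial transformation: if f : K^n → K^n is an additive bijection, γ ∈ Aut(K) satisfies f(k·x) = γ(k)·f(x) for all k ∈ K and x ∈ K^n, and f preserves Hamming weight (equivalently, Hamming distance), then there exist a permutation π of {1,…,n} and nonzero scalars c_1,…,c_n ∈ K^* such that f(x)_i = c_i · γ(x_{π(i)}) for all x ∈ K^n and all i. -/
/-!
A weight-preserving semilinear map sends each unit vector `e_j` to a vector of weight one,
`c_j • e_{σ j}`. It is injective, since only `0` has weight zero; so if `σ j = σ j'` then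
`f e_j`, being a multiple of `f e_j'`, forces `e_j` to be a multiple of `e_j'`, whence `j = j'`.
Thus `σ` is a permutation, and semilinearity determines `f` from its values on the unit vectors.
-/

open Finset

section

variable {ι K : Type*} [Fintype ι] [DecidableEq ι] [Zero K] [DecidableEq K]

theorem hammingNorm_pi_single (i : ι) {a : K} (ha : a ≠ 0) :
    hammingNorm (Pi.single i a : ι → K) = 1 := by
  rw [hammingNorm, card_eq_one]
  exact ⟨i, by ext j; by_cases h : j = i <;> simp [h, ha]⟩

theorem exists_eq_pi_single_of_hammingNorm_eq_one {y : ι → K} (hy : hammingNorm y = 1) :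
    ∃ i, y i ≠ 0 ∧ y = Pi.single i (y i) := by
  obtain ⟨i, hi⟩ := card_eq_one.mp hy
  have hsupp : ∀ j, y j ≠ 0 ↔ j = i := fun j => by simpa using congrArg (j ∈ ·) hi
  refine ⟨i, (hsupp i).2 rfl, funext fun j => ?_⟩
  by_cases h : j = i
  · subst h; simp
  · simpa [h] using mt (hsupp j).1 h

end

section

variable {ι K : Type*} [Fintype ι] [Field K] [DecidableEq K] {γ : RingAut K}
  (f : (ι → K) →ₛₗ[(γ : K →+* K)] (ι → K))
  (hf : ∀ x, hammingNorm (f x) = hammingNorm x)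

include hf

theorem injective_of_map_hammingNorm_eq : Function.Injective f := by
  refine (injective_iff_map_eq_zero f).2 fun x hx => ?_
  rwa [← hammingNorm_eq_zero, ← hf, hammingNorm_eq_zero]

variable [DecidableEq ι]

theorem exists_perm_units_map_pi_single_one :
    ∃ (σ : Equiv.Perm ι) (c : ι → Kˣ),
      ∀ j, f (Pi.single j 1) = Pi.single (σ j) (c j : K) := by
  choose σ hc hσ using fun j : ι =>
    exists_eq_pi_single_of_hammingNorm_eq_one
      ((hf _).trans (hammingNorm_pi_single j one_ne_zero))
  have hσ_inj : Function.Injective σ := by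
    intro j j' hjj'
    by_contra hne
    set t := γ.symm (f (Pi.single j 1) (σ j) / f (Pi.single j' 1) (σ j'))
    have : Pi.single j (1 : K) = t • Pi.single j' 1 := by
      apply injective_of_map_hammingNorm_eq f hf
      rw [map_smulₛₗ, hσ j, hσ j', hjj']
      simp [t, ← Pi.single_smul, div_mul_cancel₀ _ (hc j'), hjj']
    simpa [hne] using congrFun this j
  exact ⟨Equiv.ofBijective σ (Finite.injective_iff_bijective.1 hσ_inj),
    fun j => Units.mk0 _ (hc j), hσ⟩

theorem exists_perm_units_of_map_hammingNorm_eq :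
    ∃ (π : Equiv.Perm ι) (c : ι → Kˣ), ∀ x i, f x i = c i * γ (x (π i)) := by
  obtain ⟨σ, c, hσ⟩ := exists_perm_units_map_pi_single_one f hf
  have hf_single (j : ι) (a : K) : f (Pi.single j a) = Pi.single (σ j) (c j * γ a) := by
    rw [← mul_one a, ← smul_eq_mul, Pi.single_smul', map_smulₛₗ, hσ, ← Pi.single_smul']
    simp [mul_comm]
  refine ⟨σ.symm, fun i => c (σ.symm i), fun x i => ?_⟩
  calc f x i = ∑ j, f (Pi.single j (x j)) i := by
        rw [← Finset.sum_apply, ← map_sum, Finset.univ_sum_single]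
    _ = ∑ j, (Pi.single (σ j) (c (σ.symm (σ j)) * γ (x (σ.symm (σ j)))) : ι → K) i := by
        simp only [hf_single, Equiv.symm_apply_apply]
    _ = c (σ.symm i) * γ (x (σ.symm i)) := by
        rw [Equiv.sum_comp σ
            fun j => (Pi.single j (c (σ.symm j) * γ (x (σ.symm j))) : ι → K) i,
          Finset.sum_pi_single, if_pos (Finset.mem_univ i)]

end

theorem stmt9_general {K : Type*} [Field K] [DecidableEq K]
    (n : ℕ)
    (f : (Fin n → K) → (Fin n → K))
    (hadd : ∀ x y : Fin n → K, f (x + y) = f x + f y)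
    (γ : RingAut K) (hsemi : ∀ (k : K) (x : Fin n → K), f (k • x) = γ k • f x)
    (hwt : ∀ x : Fin n → K, hammingNorm (f x) = hammingNorm x) :
    ∃ (π : Equiv.Perm (Fin n)) (c : Fin n → Kˣ),
      ∀ (x : Fin n → K) (i : Fin n), f x i = (c i : K) * γ (x (π i)) :=
  exists_perm_units_of_map_hammingNorm_eq
    (γ := γ) { toFun := f, map_add' := hadd, map_smul' := hsemi } hwt

/-- Every semilinear isometry of the Hamming space `K^n` over a
finite field `K` is a semilinear monomial transformation: if `f : K^n → K^n` is an
additive bijection, `γ ∈ Aut(K)` satisfies `f(k·x) = γ(k)·f(x)`, and `f` preserves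
the Hamming weight, then there are a permutation `π` of the coordinates and nonzero
scalars `c_i` with `f(x)_i = c_i · γ(x_{π(i)})`. -/
theorem stmt9 {K : Type*} [Field K] [Fintype K] [DecidableEq K]
    (n : ℕ) (hn : 1 ≤ n)
    (f : (Fin n → K) → (Fin n → K)) (hbij : Function.Bijective f)
    (hadd : ∀ x y : Fin n → K, f (x + y) = f x + f y)
    (γ : RingAut K) (hsemi : ∀ (k : K) (x : Fin n → K), f (k • x) = γ k • f x)
    (hwt : ∀ x : Fin n → K, hammingNorm (f x) = hammingNorm x) :
    ∃ (π : Equiv.Perm (Fin n)) (c : Fin n → Kˣ),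
      ∀ (x : Fin n → K) (i : Fin n), f x i = (c i : K) * γ (x (π i)) :=
  stmt9_general n f hadd γ hsemi hwt
end

section
/- Let C be a left ideal of R = K[G,Θ,α], with coordinates indexed by G via the basis {ḡ : g ∈ G}. For λ ∈ K^* and g ∈ G define u_{λ,g} : R → R by u_{λ,g}(x) = (λḡ)·x, so that u_{λ,g}(Σ_h c_h h̄) = Σ_h λ·Θ(g)(c_h)·α(g,h)·(gh)‾. Then: (i) each u_{λ,g} maps C onto C, is additive, Hamming-weight-preserving, and satisfies u_{λ,g}(k·x) = Θ(g)(k)·u_{λ,g}(x) for all k ∈ K; (ii) u_{λ,g} ∘ u_{μ,h} = u_{λ·Θ(g)(μ)·α(g,h), gh}, so these maps form a group G̃ under composition; (iii) the coordinate permutation induced by u_{λ,g} is h ↦ gh, so the induced permutations act regularly on G; (iv) u_{λ,g} is K-linear and acts by coordinate-wise scaling only if g = 1, in which case it is the scalar multiplication by λ. -/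
open Finset

variable {K : Type*} {G : Type*}

/-- The map `u_{λ,g} : x ↦ (λḡ)·x`, coefficientwise
`u_{λ,g}(Σ_h c_h h̄) = Σ_h λ·Θ(g)(c_h)·α(g,h)·(gh)‾`. -/
def uMap [Field K] [Group G] (Θ : G →* RingAut K) (α : G → G → Kˣ)
    (lam : K) (g : G) (x : G → K) : G → K :=
  fun k => lam * Θ g (x (g⁻¹ * k)) * (α g (g⁻¹ * k) : K)

/-! `u_{λ,g}` moves coordinate `h` to `gh`, applying `Θ(g)` and scaling by the nonzero factor
`λ·α(g,h)`. The cocycle identity and `Θ(G)`-stability of `α` give the composition law, so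
`u_{λ,g}` has the explicit inverse `u_{μ,g⁻¹}` with `Θ(g)(μ) = (λ·α(g,g⁻¹))⁻¹`; as both are left
multiplications, they map a left ideal into itself, hence `u_{λ,g}` maps it onto itself. -/

section uMap

variable [Field K] [Group G] (Θ : G →* RingAut K) (α : G → G → Kˣ)

lemma uMap_apply_mul (lam : K) (g h : G) (x : G → K) :
    uMap Θ α lam g x (g * h) = lam * Θ g (x h) * α g h := by
  simp only [uMap, inv_mul_cancel_left]

lemma uMap_apply_mul_ne_zero_iff {lam : K} (hlam : lam ≠ 0) (g h : G) (x : G → K) :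
    uMap Θ α lam g x (g * h) ≠ 0 ↔ x h ≠ 0 := by
  simp [uMap_apply_mul, hlam]

lemma uMap_add (lam : K) (g : G) (x y : G → K) :
    uMap Θ α lam g (x + y) = uMap Θ α lam g x + uMap Θ α lam g y := by
  funext k
  simp only [uMap, Pi.add_apply, map_add]
  ring

lemma uMap_smul (lam : K) (g : G) (k : K) (x : G → K) :
    uMap Θ α lam g (k • x) = Θ g k • uMap Θ α lam g x := by
  funext m
  simp only [uMap, Pi.smul_apply, smul_eq_mul, map_mul]
  ring

lemma uMap_injective {lam : K} (hlam : lam ≠ 0) (g : G) : Function.Injective (uMap Θ α lam g) := by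
  intro x y hxy
  funext h
  have hgh := congrFun hxy (g * h)
  rw [uMap_apply_mul, uMap_apply_mul] at hgh
  exact (Θ g).injective (mul_left_cancel₀ hlam (mul_right_cancel₀ (α g h).ne_zero hgh))

lemma hammingNorm_uMap {lam : K} (hlam : lam ≠ 0) (g : G) [Fintype G] [DecidableEq K] (x : G → K) :
    hammingNorm (uMap Θ α lam g x) = hammingNorm x :=
  (card_equiv (Equiv.mulLeft g) fun h => by
    simpa using (uMap_apply_mul_ne_zero_iff Θ α hlam g h x).symm).symm

lemma uMap_one_eq_smul (hα : ∀ g, α 1 g = 1) (lam : K) (x : G → K) :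
    uMap Θ α lam 1 x = lam • x := by
  funext k
  simp [uMap, hα]

lemma eq_one_of_uMap_apply_eq_mul {lam : K} (hlam : lam ≠ 0) {g : G} (d : G → K)
    (hd : ∀ (x : G → K) (k : G), uMap Θ α lam g x k = d k * x k) : g = 1 := by
  classical
  by_contra hg
  have hg1 := (uMap_apply_mul_ne_zero_iff Θ α hlam g 1 (Pi.single 1 1)).2 (by simp)
  rw [hd, mul_one, Pi.single_eq_of_ne hg, mul_zero] at hg1
  exact hg1 rfl

lemma uMap_single [DecidableEq G] (lam : K) (g h : G) :
    uMap Θ α lam g (Pi.single h 1) = lam • ((α g h : K) • (Pi.single (g * h) 1 : G → K)) := by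
  funext k
  obtain ⟨m, rfl⟩ : ∃ m, k = g * m := ⟨g⁻¹ * k, by group⟩
  rw [uMap_apply_mul]
  by_cases hm : m = h <;> simp [hm]

lemma uMap_eq_tsMul [Fintype G] [DecidableEq G] (lam : K) (g : G) (x : G → K) :
    uMap Θ α lam g x = tsMul Θ α (fun h => if h = g then lam else 0) x := by
  funext k
  rw [tsMul, Fintype.sum_eq_single (g, g⁻¹ * k)]
  · simp [uMap]
  · rintro ⟨a, b⟩ hab
    split_ifs with hk ha
    · subst hk ha
      simp at hab
    all_goals simp

lemma uMap_mapsTo [Fintype G] [DecidableEq G] {C : Set (G → K)}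
    (hC : ∀ r : G → K, ∀ c ∈ C, tsMul Θ α r c ∈ C) (lam : K) (g : G) :
    Set.MapsTo (uMap Θ α lam g) C C := fun c hc => by
  rw [uMap_eq_tsMul]
  exact hC _ c hc

variable (hcoc : ∀ g₁ g₂ g₃ : G, α g₁ (g₂ * g₃) * α g₂ g₃ = α (g₁ * g₂) g₃ * α g₁ g₂)
  (hstab : ∀ g x y : G, Θ g ((α x y : K)) = (α x y : K))
include hcoc hstab

lemma uMap_comp (lam mu : K) (g h : G) :
    uMap Θ α lam g ∘ uMap Θ α mu h = uMap Θ α (lam * Θ g mu * (α g h : K)) (g * h) := by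
  funext x k
  obtain ⟨m, rfl⟩ : ∃ m, k = g * h * m := ⟨(g * h)⁻¹ * k, by group⟩
  have hα := congrArg Units.val (hcoc g h m)
  push_cast at hα
  rw [Function.comp_apply, mul_assoc g h m, uMap_apply_mul, uMap_apply_mul, ← mul_assoc g h m,
    uMap_apply_mul, map_mul Θ, RingAut.mul_apply, map_mul, map_mul, hstab]
  linear_combination lam * Θ g mu * Θ g (Θ h (x m)) * hα

lemma uMap_comp_uMap_inv (hα : ∀ g, α 1 g = 1) {lam : K} (hlam : lam ≠ 0) (g : G) :
    uMap Θ α lam g ∘ uMap Θ α ((Θ g).symm (lam * α g g⁻¹)⁻¹) g⁻¹ = id := by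
  have hunit : lam * (lam * (α g g⁻¹ : K))⁻¹ * α g g⁻¹ = 1 := by
    field_simp
  rw [uMap_comp Θ α hcoc hstab, RingEquiv.apply_symm_apply, hunit, mul_inv_cancel]
  funext x
  rw [uMap_one_eq_smul Θ α hα, one_smul, id]

lemma uMap_bijective (hα : ∀ g, α 1 g = 1) {lam : K} (hlam : lam ≠ 0) (g : G) :
    Function.Bijective (uMap Θ α lam g) :=
  ⟨uMap_injective Θ α hlam g,
    Function.LeftInverse.surjective (congrFun (uMap_comp_uMap_inv Θ α hcoc hstab hα hlam g))⟩

lemma uMap_image_eq [Fintype G] [DecidableEq G] (hα : ∀ g, α 1 g = 1) {C : Set (G → K)}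
    (hC : ∀ r : G → K, ∀ c ∈ C, tsMul Θ α r c ∈ C) {lam : K} (hlam : lam ≠ 0) (g : G) :
    uMap Θ α lam g '' C = C :=
  have hinv : Set.LeftInvOn (uMap Θ α lam g) _ C := fun c _ =>
    congrFun (uMap_comp_uMap_inv Θ α hcoc hstab hα hlam g) c
  (hinv.surjOn (uMap_mapsTo Θ α hC _ _)).image_eq_of_mapsTo (uMap_mapsTo Θ α hC lam g)

end uMap

theorem stmt10_general [Field K] [DecidableEq K] [Group G] [Fintype G] [DecidableEq G]
    (Θ : G →* RingAut K) (α : G → G → Kˣ)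
    (hnorm : ∀ g : G, α g 1 = 1 ∧ α 1 g = 1)
    (hcoc : ∀ g₁ g₂ g₃ : G, α g₁ (g₂ * g₃) * α g₂ g₃ = α (g₁ * g₂) g₃ * α g₁ g₂)
    (hstab : ∀ g x y : G, Θ g ((α x y : K)) = (α x y : K))
    (C : Submodule K (G → K))
    (hC : ∀ r : G → K, ∀ c ∈ C, tsMul Θ α r c ∈ C) :
    (∀ (lam : K) (g : G) (x : G → K),
        uMap Θ α lam g x = tsMul Θ α (fun h => if h = g then lam else 0) x) ∧
    (∀ (lam : K) (g : G), lam ≠ 0 → uMap Θ α lam g '' (C : Set (G → K)) = C) ∧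
    (∀ (lam : K) (g : G) (x y : G → K),
        uMap Θ α lam g (x + y) = uMap Θ α lam g x + uMap Θ α lam g y) ∧
    (∀ (lam : K) (g : G) (x : G → K), lam ≠ 0 →
        hammingNorm (uMap Θ α lam g x) = hammingNorm x) ∧
    (∀ (lam : K) (g : G) (k : K) (x : G → K),
        uMap Θ α lam g (k • x) = Θ g k • uMap Θ α lam g x) ∧
    (∀ (lam mu : K) (g h : G),
        uMap Θ α lam g ∘ uMap Θ α mu h = uMap Θ α (lam * Θ g mu * (α g h : K)) (g * h)) ∧
    (∀ (lam : K) (g : G), lam ≠ 0 → Function.Bijective (uMap Θ α lam g)) ∧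
    (uMap Θ α (1 : K) (1 : G) = id) ∧
    (∀ (lam : K) (g h : G),
        uMap Θ α lam g (Pi.single h 1) = lam • ((α g h : K) • (Pi.single (g * h) 1 : G → K))) ∧
    (∀ (lam : K) (g : G), lam ≠ 0 →
        (∃ d : G → K, ∀ (x : G → K) (k : G), uMap Θ α lam g x k = d k * x k) →
          g = 1 ∧ ∀ x : G → K, uMap Θ α lam g x = lam • x) := by
  have hα : ∀ g, α 1 g = 1 := fun g => (hnorm g).2
  refine ⟨uMap_eq_tsMul Θ α, fun lam g hlam => uMap_image_eq Θ α hcoc hstab hα hC hlam g,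
    uMap_add Θ α, fun lam g x hlam => hammingNorm_uMap Θ α hlam g x, uMap_smul Θ α,
    uMap_comp Θ α hcoc hstab, fun lam g hlam => uMap_bijective Θ α hcoc hstab hα hlam g,
    funext fun x => by rw [uMap_one_eq_smul Θ α hα, one_smul, id], uMap_single Θ α, ?_⟩
  rintro lam g hlam ⟨d, hd⟩
  obtain rfl := eq_one_of_uMap_apply_eq_mul Θ α hlam d hd
  exact ⟨rfl, uMap_one_eq_smul Θ α hα lam⟩

/-- For a left ideal `C` of `R = K[G,Θ,α]`, the maps `u_{λ,g}`
(`λ ∈ K^*`, `g ∈ G`): (i) map `C` onto `C`, are additive, Hamming-weight-preserving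
and `Θ(g)`-semilinear; (ii) compose by `u_{λ,g} ∘ u_{μ,h} = u_{λ·Θ(g)(μ)·α(g,h),gh}`,
are bijections, and `u_{1,1} = id`, so they form a group under composition;
(iii) permute the coordinates by `h ↦ gh` (sending basis vector `h̄` to
`λα(g,h)·(gh)‾`), hence the induced permutations act regularly on `G`;
(iv) `u_{λ,g}` acts by coordinatewise scaling only if `g = 1`, in which case it is
scalar multiplication by `λ`. -/
theorem stmt10 [Field K] [Fintype K] [DecidableEq K] [Group G] [Fintype G] [DecidableEq G]
    (Θ : G →* RingAut K) (α : G → G → Kˣ)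
    (hnorm : ∀ g : G, α g 1 = 1 ∧ α 1 g = 1)
    (hcoc : ∀ g₁ g₂ g₃ : G, α g₁ (g₂ * g₃) * α g₂ g₃ = α (g₁ * g₂) g₃ * α g₁ g₂)
    (hstab : ∀ g x y : G, Θ g ((α x y : K)) = (α x y : K))
    (C : Submodule K (G → K))
    (hC : ∀ r : G → K, ∀ c ∈ C, tsMul Θ α r c ∈ C) :
    (∀ (lam : K) (g : G) (x : G → K),
        uMap Θ α lam g x = tsMul Θ α (fun h => if h = g then lam else 0) x) ∧
    (∀ (lam : K) (g : G), lam ≠ 0 → uMap Θ α lam g '' (C : Set (G → K)) = C) ∧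
    (∀ (lam : K) (g : G) (x y : G → K),
        uMap Θ α lam g (x + y) = uMap Θ α lam g x + uMap Θ α lam g y) ∧
    (∀ (lam : K) (g : G) (x : G → K), lam ≠ 0 →
        hammingNorm (uMap Θ α lam g x) = hammingNorm x) ∧
    (∀ (lam : K) (g : G) (k : K) (x : G → K),
        uMap Θ α lam g (k • x) = Θ g k • uMap Θ α lam g x) ∧
    (∀ (lam mu : K) (g h : G),
        uMap Θ α lam g ∘ uMap Θ α mu h = uMap Θ α (lam * Θ g mu * (α g h : K)) (g * h)) ∧
    (∀ (lam : K) (g : G), lam ≠ 0 → Function.Bijective (uMap Θ α lam g)) ∧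
    (uMap Θ α (1 : K) (1 : G) = id) ∧
    (∀ (lam : K) (g h : G),
        uMap Θ α lam g (Pi.single h 1) = lam • ((α g h : K) • (Pi.single (g * h) 1 : G → K))) ∧
    (∀ (lam : K) (g : G), lam ≠ 0 →
        (∃ d : G → K, ∀ (x : G → K) (k : G), uMap Θ α lam g x k = d k * x k) →
          g = 1 ∧ ∀ x : G → K, uMap Θ α lam g x = lam • x) :=
  stmt10_general Θ α hnorm hcoc hstab C hC
end

section
/- Suppose the normalized 2-cocycle α satisfies α = α⁻¹, i.e. α(x,y)² = 1 for all x,y ∈ G. Then the Euclidean bilinear form on R = K[G,Θ,α] is adjoint-compatible: ⟨a·b, c⟩ = ⟨a, c·b̂⟩ for all a, b, c ∈ R. -/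
open Finset

variable {K : Type*} {G : Type*}

/-!
Expanding both sides of `⟨a·b, c⟩ = ⟨a, c·b̂⟩` gives sums over pairs `(x, y) ∈ G × G`; the involution
`(x, y) ↦ (xy, y⁻¹)` matches their terms up to the identity `α(x,y) = α(y,y⁻¹)·α(xy,y⁻¹)`.
That identity is the cocycle condition at `(x, y, y⁻¹)`, divided through using `α(xy,y⁻¹)² = 1`.
-/

theorem cocycle_eq_mul_of_sq_eq_one {M : Type*} [Group G] [CommGroup M] {α : G → G → M}
    (hright : ∀ g : G, α g 1 = 1)
    (hcoc : ∀ g₁ g₂ g₃ : G, α g₁ (g₂ * g₃) * α g₂ g₃ = α (g₁ * g₂) g₃ * α g₁ g₂)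
    (hsq : ∀ x y : G, α x y ^ 2 = 1) (x y : G) :
    α x y = α y y⁻¹ * α (x * y) y⁻¹ := by
  have h := hcoc x y y⁻¹
  rw [mul_inv_cancel, hright, one_mul] at h
  rw [h, mul_comm, ← mul_assoc, ← sq, hsq, one_mul]

@[simps]
def mulInvSwap (G : Type*) [Group G] : Equiv.Perm (G × G) where
  toFun p := (p.1 * p.2, p.2⁻¹)
  invFun p := (p.1 * p.2, p.2⁻¹)
  left_inv p := by simp
  right_inv p := by simp

section TwistedSkewGroupRing

variable [Field K] [Group G] (Θ : G →* RingAut K) (α : G → G → Kˣ)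

theorem map_tsAdj_inv (hstab : ∀ g x y : G, Θ g (α x y : K) = α x y) (b : G → K) (x y : G) :
    Θ (x * y) (tsAdj Θ α b y⁻¹) = Θ x (b y) * α y y⁻¹ := by
  rw [tsAdj, inv_inv, map_mul (Θ (x * y)), hstab, ← RingAut.mul_apply, ← map_mul,
    mul_inv_cancel_right]

variable [Fintype G] [DecidableEq G]

theorem sum_tsMul_mul (a b c : G → K) :
    ∑ g, tsMul Θ α a b g * c g = ∑ p : G × G, a p.1 * Θ p.1 (b p.2) * α p.1 p.2 * c (p.1 * p.2) := by
  simp only [tsMul, sum_mul, ite_mul, zero_mul]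
  rw [sum_comm]
  exact sum_congr rfl fun p _ => by rw [sum_ite_eq]; simp

theorem sum_mul_tsMul (a c d : G → K) :
    ∑ g, a g * tsMul Θ α c d g = ∑ p : G × G, a (p.1 * p.2) * (c p.1 * Θ p.1 (d p.2) * α p.1 p.2) := by
  simp only [tsMul, mul_sum, mul_ite, mul_zero]
  rw [sum_comm]
  exact sum_congr rfl fun p _ => by rw [sum_ite_eq]; simp

end TwistedSkewGroupRing

theorem stmt14_general [Field K] [Group G] [Fintype G] [DecidableEq G]
    (Θ : G →* RingAut K) (α : G → G → Kˣ)
    (hnorm : ∀ g : G, α g 1 = 1 ∧ α 1 g = 1)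
    (hcoc : ∀ g₁ g₂ g₃ : G, α g₁ (g₂ * g₃) * α g₂ g₃ = α (g₁ * g₂) g₃ * α g₁ g₂)
    (hstab : ∀ g x y : G, Θ g ((α x y : K)) = (α x y : K))
    (hα2 : ∀ x y : G, (α x y : K) ^ 2 = 1) :
    ∀ a b c : G → K,
      ∑ g : G, tsMul Θ α a b g * c g = ∑ g : G, a g * tsMul Θ α c (tsAdj Θ α b) g := by
  intro a b c
  have hsq : ∀ x y : G, α x y ^ 2 = 1 := fun x y => Units.ext (by simpa using hα2 x y)
  rw [sum_tsMul_mul, sum_mul_tsMul]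
  refine Fintype.sum_equiv (mulInvSwap G) _ _ fun ⟨x, y⟩ => ?_
  simp only [mulInvSwap_apply, mul_inv_cancel_right, map_tsAdj_inv Θ α hstab,
    cocycle_eq_mul_of_sq_eq_one (fun g => (hnorm g).1) hcoc hsq x y, Units.val_mul]
  ring

/-- If `α = α⁻¹` (i.e. `α(x,y)² = 1` for all `x,y ∈ G`), then the
Euclidean bilinear form on `R = K[G,Θ,α]` is adjoint-compatible:
`⟨a·b, c⟩ = ⟨a, c·b̂⟩` for all `a, b, c ∈ R`. -/
theorem stmt14 [Field K] [Fintype K] [Group G] [Fintype G] [DecidableEq G]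
    (Θ : G →* RingAut K) (α : G → G → Kˣ)
    (hnorm : ∀ g : G, α g 1 = 1 ∧ α 1 g = 1)
    (hcoc : ∀ g₁ g₂ g₃ : G, α g₁ (g₂ * g₃) * α g₂ g₃ = α (g₁ * g₂) g₃ * α g₁ g₂)
    (hstab : ∀ g x y : G, Θ g ((α x y : K)) = (α x y : K))
    (hα2 : ∀ x y : G, (α x y : K) ^ 2 = 1) :
    ∀ a b c : G → K,
      ∑ g : G, tsMul Θ α a b g * c g = ∑ g : G, a g * tsMul Θ α c (tsAdj Θ α b) g :=
  stmt14_general Θ α hnorm hcoc hstab hα2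
end

section
/- Suppose α = α⁻¹ (i.e. α(x,y)² = 1 for all x,y ∈ G) and let C be a left ideal of R = K[G,Θ,α]. Then C is a Euclidean LCD code, i.e. R = C ⊕ C^⊥, if and only if there exists e ∈ R with e² = e = ê and C = Re. -/
/-
The adjoint is an involution, and for the Euclidean form it satisfies `⟨a y, z⟩ = ⟨a, z ŷ⟩`; the
latter is where `α = α⁻¹` enters, through `α(g,h) = α(h,h⁻¹) α(gh,h⁻¹)`. Reading coordinates as
`(z ŷ)_g = ⟨ḡ y, z⟩` it follows that the adjoint reverses products.

If `R = C ⊕ C^⊥`, write `1 = f + b`. For `c ∈ C` the adjoint identity gives `b ĉ = 0`, so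
`ĉ = f ĉ` and, taking adjoints, `c = c f̂`. For `c = f` both give `f̂ = f f̂ = f`, so `f` is a
self-adjoint idempotent with `C = Rf`. Conversely, if `C = Re` with `e² = e = ê`, then
`⟨re, xe⟩ = ⟨re·e, x⟩ = ⟨re, x⟩` makes `x = xe + (x - xe)` the required decomposition, and an
element `re` orthogonal to `C` vanishes since `(re)_g = (re ê)_g = ⟨ḡ e, re⟩`.
-/

open Finset

variable {K : Type*} {G : Type*}

def IsTwoCocycle [Group G] [Field K] (α : G → G → Kˣ) : Prop :=
  ∀ g₁ g₂ g₃ : G, α g₁ (g₂ * g₃) * α g₂ g₃ = α (g₁ * g₂) g₃ * α g₁ g₂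

def IsStabilizedBy [Group G] [Field K] (Θ : G →* RingAut K) (α : G → G → Kˣ) : Prop :=
  ∀ g x y : G, Θ g (α x y : K) = α x y

section TwistedSkewGroupRing

variable [Field K] [Group G] {Θ : G →* RingAut K} {α : G → G → Kˣ}

lemma IsTwoCocycle.val (hcoc : IsTwoCocycle α) (g₁ g₂ g₃ : G) :
    (α g₁ (g₂ * g₃) : K) * α g₂ g₃ = α (g₁ * g₂) g₃ * α g₁ g₂ := by
  rw [← Units.val_mul, ← Units.val_mul, hcoc]

lemma IsTwoCocycle.eq_mul_inv (hcoc : IsTwoCocycle α) (hα : ∀ g, α g 1 = 1)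
    (hsq : ∀ x y : G, (α x y : K) ^ 2 = 1) (g h : G) :
    (α g h : K) = α h h⁻¹ * α (g * h) h⁻¹ := by
  have key := hcoc.val g h h⁻¹
  rw [mul_inv_cancel, hα, Units.val_one, one_mul] at key
  linear_combination -(α (g * h) h⁻¹ : K) * key - (α g h : K) * hsq (g * h) h⁻¹

lemma IsTwoCocycle.mul_inv_mul_inv (hcoc : IsTwoCocycle α)
    (hnorm : ∀ g : G, α g 1 = 1 ∧ α 1 g = 1) (hsq : ∀ x y : G, (α x y : K) ^ 2 = 1) (g : G) :
    (α g g⁻¹ : K) * α g⁻¹ g = 1 := by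
  have key := hcoc.val g g⁻¹ g
  rw [inv_mul_cancel, mul_inv_cancel, (hnorm g).1, (hnorm g).2, Units.val_one, one_mul,
    one_mul] at key
  rw [← key, ← sq, hsq]

lemma tsAdj_tsAdj (hnorm : ∀ g : G, α g 1 = 1 ∧ α 1 g = 1) (hcoc : IsTwoCocycle α)
    (hstab : IsStabilizedBy Θ α) (hsq : ∀ x y : G, (α x y : K) ^ 2 = 1) (a : G → K) :
    tsAdj Θ α (tsAdj Θ α a) = a := by
  ext x
  rw [tsAdj, tsAdj, map_mul, ← RingAut.mul_apply, ← map_mul, inv_inv, mul_inv_cancel, map_one,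
    RingAut.one_apply, hstab, mul_assoc, hcoc.mul_inv_mul_inv hnorm hsq, mul_one]

variable [DecidableEq G]

lemma tsOne_eq_single : (tsOne : G → K) = Pi.single 1 1 := by
  ext x
  by_cases hx : x = 1 <;> simp [tsOne, hx]

variable [Fintype G]

lemma tsMul_apply (a b : G → K) (x : G) :
    tsMul Θ α a b x = ∑ g, a g * Θ g (b (g⁻¹ * x)) * α g (g⁻¹ * x) := by
  rw [tsMul, Fintype.sum_prod_type]
  refine sum_congr rfl fun g _ => ?_
  simp_rw [← eq_inv_mul_iff_mul_eq]
  simp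

lemma tsMul_add_left (a a' b : G → K) :
    tsMul Θ α (a + a') b = tsMul Θ α a b + tsMul Θ α a' b := by
  ext x
  simp only [tsMul_apply, Pi.add_apply, add_mul, sum_add_distrib]

lemma tsOne_tsMul (hα : ∀ g, α 1 g = 1) (b : G → K) : tsMul Θ α tsOne b = b := by
  ext x
  simp [tsMul_apply, tsOne_eq_single, Pi.single_apply, hα]

lemma tsMul_assoc (hcoc : IsTwoCocycle α) (hstab : IsStabilizedBy Θ α) (a b c : G → K) :
    tsMul Θ α (tsMul Θ α a b) c = tsMul Θ α a (tsMul Θ α b c) := by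
  ext x
  simp only [tsMul_apply, sum_mul, mul_sum, map_sum, map_mul]
  rw [sum_comm]
  refine sum_congr rfl fun g _ => Fintype.sum_equiv (Equiv.mulLeft g⁻¹) _ _ fun h => ?_
  have hcomp : Θ g (Θ (g⁻¹ * h) (c ((g⁻¹ * h)⁻¹ * (g⁻¹ * x)))) = Θ h (c (h⁻¹ * x)) := by
    rw [← RingAut.mul_apply, ← map_mul]
    simp only [mul_inv_rev, inv_inv, mul_assoc, mul_inv_cancel_left]
  have hc := hcoc.val g (g⁻¹ * h) (h⁻¹ * x)
  simp only [mul_inv_cancel_left, mul_assoc] at hc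
  rw [Equiv.coe_mulLeft, hcomp, hstab]
  simp only [mul_inv_rev, inv_inv, mul_assoc, mul_inv_cancel_left]
  linear_combination -(a g * Θ g (b (g⁻¹ * h)) * Θ h (c (h⁻¹ * x))) * hc

section Adjoint

variable (hα : ∀ g, α g 1 = 1) (hcoc : IsTwoCocycle α) (hstab : IsStabilizedBy Θ α)
  (hsq : ∀ x y : G, (α x y : K) ^ 2 = 1)
include hα hcoc hstab hsq

lemma tsMul_dotProduct (a y z : G → K) :
    tsMul Θ α a y ⬝ᵥ z = a ⬝ᵥ tsMul Θ α z (tsAdj Θ α y) := by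
  simp only [dotProduct, tsMul_apply, sum_mul, mul_sum]
  rw [sum_comm]
  refine sum_congr rfl fun g _ => sum_congr rfl fun x _ => ?_
  have hcomp : Θ x (Θ (x⁻¹ * g) (y (x⁻¹ * g)⁻¹)) = Θ g (y (g⁻¹ * x)) := by
    rw [← RingAut.mul_apply, ← map_mul, mul_inv_cancel_left, mul_inv_rev, inv_inv]
  have hα' := hcoc.eq_mul_inv hα hsq g (g⁻¹ * x)
  rw [mul_inv_cancel_left, mul_inv_rev, inv_inv] at hα'
  rw [tsAdj, map_mul, hcomp, hstab, mul_inv_rev, inv_inv, hα']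
  ring

lemma tsMul_tsAdj_apply (z y : G → K) (g : G) :
    tsMul Θ α z (tsAdj Θ α y) g = tsMul Θ α (Pi.single g 1) y ⬝ᵥ z := by
  rw [tsMul_dotProduct hα hcoc hstab hsq, single_one_dotProduct]

variable {e : G → K} (he : tsMul Θ α e e = e) (hadj : tsAdj Θ α e = e)
include he hadj

lemma dotProduct_sub_tsMul_idempotent (r x : G → K) :
    tsMul Θ α r e ⬝ᵥ (x - tsMul Θ α x e) = 0 := by
  have h : tsMul Θ α r e ⬝ᵥ x = tsMul Θ α r e ⬝ᵥ tsMul Θ α x e :=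
    calc tsMul Θ α r e ⬝ᵥ x = tsMul Θ α (tsMul Θ α r e) e ⬝ᵥ x := by
          rw [tsMul_assoc hcoc hstab, he]
      _ = tsMul Θ α r e ⬝ᵥ tsMul Θ α x e := by
          rw [tsMul_dotProduct hα hcoc hstab hsq, hadj]
  rw [dotProduct_sub, h, sub_self]

lemma tsMul_idempotent_eq_zero (r : G → K)
    (horth : ∀ s : G → K, tsMul Θ α s e ⬝ᵥ tsMul Θ α r e = 0) : tsMul Θ α r e = 0 := by
  ext g
  calc tsMul Θ α r e g = tsMul Θ α (tsMul Θ α r e) (tsAdj Θ α e) g := by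
        rw [hadj, tsMul_assoc hcoc hstab, he]
    _ = 0 := by rw [tsMul_tsAdj_apply hα hcoc hstab hsq]; exact horth _

end Adjoint

variable (hnorm : ∀ g : G, α g 1 = 1 ∧ α 1 g = 1) (hcoc : IsTwoCocycle α)
  (hstab : IsStabilizedBy Θ α) (hsq : ∀ x y : G, (α x y : K) ^ 2 = 1)
include hnorm hcoc hstab hsq

lemma tsAdj_tsMul_s15 (a b : G → K) :
    tsAdj Θ α (tsMul Θ α a b) = tsMul Θ α (tsAdj Θ α b) (tsAdj Θ α a) := by
  have hα g := (hnorm g).1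
  have hα' g := (hnorm g).2
  ext g
  calc tsAdj Θ α (tsMul Θ α a b) g
      = tsMul Θ α (Pi.single g 1) (tsMul Θ α a b) ⬝ᵥ tsOne := by
        rw [← tsMul_tsAdj_apply hα hcoc hstab hsq, tsOne_tsMul hα']
    _ = tsMul Θ α (Pi.single g 1) a ⬝ᵥ tsAdj Θ α b := by
        rw [← tsMul_assoc hcoc hstab, tsMul_dotProduct hα hcoc hstab hsq, tsOne_tsMul hα']
    _ = tsMul Θ α (tsAdj Θ α b) (tsAdj Θ α a) g :=
        (tsMul_tsAdj_apply hα hcoc hstab hsq _ _ _).symm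

lemma exists_idempotent_of_tsOne_eq_add {C : Submodule K (G → K)}
    (hC : ∀ r : G → K, ∀ c ∈ C, tsMul Θ α r c ∈ C) {f b : G → K}
    (hf : f ∈ C) (hb : ∀ c ∈ C, c ⬝ᵥ b = 0) (hfb : tsOne = f + b) :
    tsMul Θ α f f = f ∧ tsAdj Θ α f = f ∧
      (C : Set (G → K)) = {x | ∃ r : G → K, x = tsMul Θ α r f} := by
  have hbC : ∀ c ∈ C, tsMul Θ α b (tsAdj Θ α c) = 0 := fun c hc => funext fun g => by
    rw [tsMul_tsAdj_apply (fun g => (hnorm g).1) hcoc hstab hsq]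
    exact hb _ (hC _ c hc)
  have hfC : ∀ c ∈ C, tsMul Θ α f (tsAdj Θ α c) = tsAdj Θ α c := fun c hc =>
    calc tsMul Θ α f (tsAdj Θ α c)
        = tsMul Θ α f (tsAdj Θ α c) + tsMul Θ α b (tsAdj Θ α c) := by rw [hbC c hc, add_zero]
      _ = tsAdj Θ α c := by rw [← tsMul_add_left, ← hfb, tsOne_tsMul fun g => (hnorm g).2]
  have hCf : ∀ c ∈ C, tsMul Θ α c (tsAdj Θ α f) = c := fun c hc =>
    calc tsMul Θ α c (tsAdj Θ α f)
        = tsMul Θ α (tsAdj Θ α (tsAdj Θ α c)) (tsAdj Θ α f) := by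
          rw [tsAdj_tsAdj hnorm hcoc hstab hsq]
      _ = tsAdj Θ α (tsMul Θ α f (tsAdj Θ α c)) := (tsAdj_tsMul_s15 hnorm hcoc hstab hsq _ _).symm
      _ = c := by rw [hfC c hc, tsAdj_tsAdj hnorm hcoc hstab hsq]
  have hself : tsAdj Θ α f = f := (hfC f hf).symm.trans (hCf f hf)
  refine ⟨by simpa only [hself] using hCf f hf, hself, Set.ext fun x => ⟨fun hx => ?_, ?_⟩⟩
  · exact ⟨x, by rw [← hself]; exact (hCf x hx).symm⟩
  · rintro ⟨r, rfl⟩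
    exact hC r f hf

end TwistedSkewGroupRing

theorem stmt15_general [Field K] [Group G] [Fintype G] [DecidableEq G]
    (Θ : G →* RingAut K) (α : G → G → Kˣ)
    (hnorm : ∀ g : G, α g 1 = 1 ∧ α 1 g = 1)
    (hcoc : ∀ g₁ g₂ g₃ : G, α g₁ (g₂ * g₃) * α g₂ g₃ = α (g₁ * g₂) g₃ * α g₁ g₂)
    (hstab : ∀ g x y : G, Θ g ((α x y : K)) = (α x y : K))
    (hα2 : ∀ x y : G, (α x y : K) ^ 2 = 1)
    (C : Submodule K (G → K))
    (hC : ∀ r : G → K, ∀ c ∈ C, tsMul Θ α r c ∈ C) :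
    ((∀ x ∈ C, (∀ c ∈ C, ∑ g : G, c g * x g = 0) → x = 0) ∧
     (∀ x : G → K, ∃ c ∈ C, ∃ b : G → K,
        (∀ c' ∈ C, ∑ g : G, c' g * b g = 0) ∧ x = c + b)) ↔
      ∃ e : G → K, tsMul Θ α e e = e ∧ tsAdj Θ α e = e ∧
        (C : Set (G → K)) = {x | ∃ r : G → K, x = tsMul Θ α r e} := by
  have hnorm_right g := (hnorm g).1
  constructor
  · rintro ⟨-, hdecomp⟩
    obtain ⟨f, hf, b, hb, hfb⟩ := hdecomp tsOne
    exact ⟨f, exists_idempotent_of_tsOne_eq_add hnorm hcoc hstab hα2 hC hf hb hfb⟩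
  · rintro ⟨e, he, hadj, hCe⟩
    have hmem (x : G → K) : x ∈ C ↔ ∃ r, x = tsMul Θ α r e := Set.ext_iff.mp hCe x
    refine ⟨fun x hx horth => ?_, fun x => ⟨tsMul Θ α x e, (hmem _).2 ⟨x, rfl⟩, x - tsMul Θ α x e,
      fun c hc => ?_, by abel⟩⟩
    · obtain ⟨r, rfl⟩ := (hmem x).1 hx
      exact tsMul_idempotent_eq_zero hnorm_right hcoc hstab hα2 he hadj r
        fun s => horth _ ((hmem _).2 ⟨s, rfl⟩)
    · obtain ⟨r, rfl⟩ := (hmem c).1 hc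
      exact dotProduct_sub_tsMul_idempotent hnorm_right hcoc hstab hα2 he hadj r x

/-- Suppose `α = α⁻¹` and let `C` be a left ideal of
`R = K[G,Θ,α]`.  Then `C` is Euclidean LCD (`R = C ⊕ C^⊥`) iff `C = Re` for some
idempotent `e` with `e² = e = ê`. -/
theorem stmt15 [Field K] [Fintype K] [Group G] [Fintype G] [DecidableEq G]
    (Θ : G →* RingAut K) (α : G → G → Kˣ)
    (hnorm : ∀ g : G, α g 1 = 1 ∧ α 1 g = 1)
    (hcoc : ∀ g₁ g₂ g₃ : G, α g₁ (g₂ * g₃) * α g₂ g₃ = α (g₁ * g₂) g₃ * α g₁ g₂)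
    (hstab : ∀ g x y : G, Θ g ((α x y : K)) = (α x y : K))
    (hα2 : ∀ x y : G, (α x y : K) ^ 2 = 1)
    (C : Submodule K (G → K))
    (hC : ∀ r : G → K, ∀ c ∈ C, tsMul Θ α r c ∈ C) :
    ((∀ x ∈ C, (∀ c ∈ C, ∑ g : G, c g * x g = 0) → x = 0) ∧
     (∀ x : G → K, ∃ c ∈ C, ∃ b : G → K,
        (∀ c' ∈ C, ∑ g : G, c' g * b g = 0) ∧ x = c + b)) ↔
      ∃ e : G → K, tsMul Θ α e e = e ∧ tsAdj Θ α e = e ∧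
        (C : Set (G → K)) = {x | ∃ r : G → K, x = tsMul Θ α r e} :=
  stmt15_general Θ α hnorm hcoc hstab hα2 C hC
end
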